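/- arXiv:2510.02761 — 4 statements merged into one kernel-verified Lean document; each statement's English description precedes it below -/
import Mathlib

section
/- Let u, v : ℝ × [0,T] → ℝ be C¹ and satisfy uₜ − v vₓ = 0 and vₜ + u vₓ = 0, with u(x,0)² + v(x,0)² = 1 for all x. Then u(x,t)² + v(x,t)² = 1 for all (x,t), and consequently u satisfies the inviscid Burgers equation uₜ + u uₓ = 0. -/
/-!
Along the system, `∂ₜ(u² + v²) = 2u·(v vₓ) + 2v·(-u vₓ) = 0`, so `u² + v²` keeps its initial
value `1`. Differentiating `u² + v² = 1` in `x` gives `u uₓ = -v vₓ`, and the first equation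
`uₜ = v vₓ` then becomes `uₜ + u uₓ = 0`.
-/

open Set Function

section PartialDifferentiability

variable {𝕜 E F G : Type*} [NontriviallyNormedField 𝕜]
  [NormedAddCommGroup E] [NormedSpace 𝕜 E] [NormedAddCommGroup F] [NormedSpace 𝕜 F]
  [NormedAddCommGroup G] [NormedSpace 𝕜 G] {f : E → F → G}

theorem Differentiable.of_uncurry_left (hf : Differentiable 𝕜 (uncurry f)) (y : F) :
    Differentiable 𝕜 fun x => f x y :=
  hf.comp (differentiable_id.prodMk (differentiable_const y))

theorem Differentiable.of_uncurry_right (hf : Differentiable 𝕜 (uncurry f)) (x : E) :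
    Differentiable 𝕜 (f x) :=
  hf.comp ((differentiable_const x).prodMk differentiable_id)

end PartialDifferentiability

theorem hasDerivAt_sq_add_sq {f g : ℝ → ℝ} {f' g' x : ℝ} (hf : HasDerivAt f f' x)
    (hg : HasDerivAt g g' x) :
    HasDerivAt (fun y => f y ^ 2 + g y ^ 2) (2 * (f x * f' + g x * g')) x := by
  have h : HasDerivAt (fun y => f y ^ 2 + g y ^ 2) _ x := (hf.pow 2).add (hg.pow 2)
  convert h using 1
  norm_num
  ring

theorem mul_deriv_add_mul_deriv_eq_zero_of_sq_add_sq_eq {f g : ℝ → ℝ} {c x : ℝ}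
    (hf : DifferentiableAt ℝ f x) (hg : DifferentiableAt ℝ g x)
    (h : ∀ y, f y ^ 2 + g y ^ 2 = c) :
    f x * deriv f x + g x * deriv g x = 0 := by
  have hconst : (fun y => f y ^ 2 + g y ^ 2) = fun _ => c := funext h
  have hderiv := hasDerivAt_sq_add_sq hf.hasDerivAt hg.hasDerivAt
  rw [hconst] at hderiv
  linarith [hderiv.unique (hasDerivAt_const x c)]

theorem sq_add_sq_eq_initial_of_rotation {T : ℝ} {u v : ℝ → ℝ → ℝ}
    (hut : ∀ x, Differentiable ℝ (u x)) (hvt : ∀ x, Differentiable ℝ (v x))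
    (h1 : ∀ x, ∀ t ∈ Icc 0 T, deriv (u x) t - v x t * deriv (fun y => v y t) x = 0)
    (h2 : ∀ x, ∀ t ∈ Icc 0 T, deriv (v x) t + u x t * deriv (fun y => v y t) x = 0)
    (x : ℝ) : ∀ t ∈ Icc 0 T, u x t ^ 2 + v x t ^ 2 = u x 0 ^ 2 + v x 0 ^ 2 := by
  refine constant_of_has_deriv_right_zero
    (((hut x).continuous.pow 2).add ((hvt x).continuous.pow 2)).continuousOn fun s hs => ?_
  have hderiv := hasDerivAt_sq_add_sq (hut x s).hasDerivAt (hvt x s).hasDerivAt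
  have hzero : 2 * (u x s * deriv (u x) s + v x s * deriv (v x) s) = 0 := by
    linear_combination 2 * u x s * h1 x s (Ico_subset_Icc_self hs)
      + 2 * v x s * h2 x s (Ico_subset_Icc_self hs)
  exact (hzero ▸ hderiv).hasDerivWithinAt

theorem circle_ansatz_reduces_to_burgers_general
    (T : ℝ) (u v : ℝ → ℝ → ℝ)
    (hu : ContDiff ℝ 1 fun p : ℝ × ℝ => u p.1 p.2)
    (hv : ContDiff ℝ 1 fun p : ℝ × ℝ => v p.1 p.2)
    (h1 : ∀ x : ℝ, ∀ t ∈ Set.Icc (0 : ℝ) T,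
      deriv (fun s => u x s) t - v x t * deriv (fun y => v y t) x = 0)
    (h2 : ∀ x : ℝ, ∀ t ∈ Set.Icc (0 : ℝ) T,
      deriv (fun s => v x s) t + u x t * deriv (fun y => v y t) x = 0)
    (hinit : ∀ x : ℝ, (u x 0) ^ 2 + (v x 0) ^ 2 = 1) :
    (∀ x : ℝ, ∀ t ∈ Set.Icc (0 : ℝ) T, (u x t) ^ 2 + (v x t) ^ 2 = 1) ∧
      (∀ x : ℝ, ∀ t ∈ Set.Icc (0 : ℝ) T,
        deriv (fun s => u x s) t + u x t * deriv (fun y => u y t) x = 0) := by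
  have hud : Differentiable ℝ (uncurry u) := hu.differentiable one_ne_zero
  have hvd : Differentiable ℝ (uncurry v) := hv.differentiable one_ne_zero
  have circle : ∀ x, ∀ t ∈ Icc 0 T, u x t ^ 2 + v x t ^ 2 = 1 := fun x t ht =>
    (sq_add_sq_eq_initial_of_rotation hud.of_uncurry_right hvd.of_uncurry_right h1 h2 x t ht).trans
      (hinit x)
  refine ⟨circle, fun x t ht => ?_⟩
  have hspace := mul_deriv_add_mul_deriv_eq_zero_of_sq_add_sq_eq
    (hud.of_uncurry_left t x) (hvd.of_uncurry_left t x) fun y => circle y t ht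
  linear_combination h1 x t ht + hspace

/-- If `uₜ − v vₓ = 0`, `vₜ + u vₓ = 0` with `u² + v² = 1` at `t = 0`, then
`u² + v² = 1` for all times, and `u` solves the inviscid Burgers equation
`uₜ + u uₓ = 0`. -/
theorem circle_ansatz_reduces_to_burgers
    (T : ℝ) (hT : 0 < T) (u v : ℝ → ℝ → ℝ)
    (hu : ContDiff ℝ 1 fun p : ℝ × ℝ => u p.1 p.2)
    (hv : ContDiff ℝ 1 fun p : ℝ × ℝ => v p.1 p.2)
    (h1 : ∀ x : ℝ, ∀ t ∈ Set.Icc (0 : ℝ) T,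
      deriv (fun s => u x s) t - v x t * deriv (fun y => v y t) x = 0)
    (h2 : ∀ x : ℝ, ∀ t ∈ Set.Icc (0 : ℝ) T,
      deriv (fun s => v x s) t + u x t * deriv (fun y => v y t) x = 0)
    (hinit : ∀ x : ℝ, (u x 0) ^ 2 + (v x 0) ^ 2 = 1) :
    (∀ x : ℝ, ∀ t ∈ Set.Icc (0 : ℝ) T, (u x t) ^ 2 + (v x t) ^ 2 = 1) ∧
      (∀ x : ℝ, ∀ t ∈ Set.Icc (0 : ℝ) T,
        deriv (fun s => u x s) t + u x t * deriv (fun y => u y t) x = 0) :=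
  circle_ansatz_reduces_to_burgers_general T u v hu hv h1 h2 hinit
end

section
/- There exists smooth periodic initial data for which the solution of the 2D inviscid rotational Burgers equation ∂ₜu + ω u^⊥ = 0 (with ω = ∂ₓu₂ − ∂ᵧu₁, u^⊥ = (−u₂, u₁)) develops a singularity in finite time; specifically, the derivative of a component becomes unbounded in L^∞ in finite time. -/
noncomputable def pd2 (i : Fin 2) (f : (Fin 2 → ℝ) → ℝ) (x : Fin 2 → ℝ) : ℝ :=
  fderiv ℝ f x (Pi.single i 1)

open Set

abbrev E2 := Fin 2 → ℝ

noncomputable def Uc (u : ℝ → E2 → E2) (i : Fin 2) : ℝ × E2 → ℝ := fun p => u p.1 p.2 i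

noncomputable def Amat (u : ℝ → E2 → E2) (i j : Fin 2) (p : ℝ × E2) : ℝ :=
  fderiv ℝ (Uc u i) p ((0:ℝ), Pi.single j 1)

section helpers

variable {u : ℝ → E2 → E2}

lemma hUc (hu : ContDiff ℝ 1 (fun p : ℝ × E2 => u p.1 p.2)) (i : Fin 2) :
    ContDiff ℝ 1 (Uc u i) := contDiff_pi.mp hu i

lemma hdUc (hu : ContDiff ℝ 1 (fun p : ℝ × E2 => u p.1 p.2)) (i : Fin 2) (p : ℝ × E2) :
    DifferentiableAt ℝ (Uc u i) p := (hUc hu i).differentiable one_ne_zero p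

lemma slice_x (hu : ContDiff ℝ 1 (fun p : ℝ × E2 => u p.1 p.2)) (i : Fin 2) (t : ℝ) (x : E2) :
    HasFDerivAt (fun y => u t y i)
      ((fderiv ℝ (Uc u i) (t,x)).comp ((0 : E2 →L[ℝ] ℝ).prod (ContinuousLinearMap.id ℝ E2))) x := by
  have h1 : HasFDerivAt (fun y : E2 => ((t, y) : ℝ × E2))
      ((0 : E2 →L[ℝ] ℝ).prod (ContinuousLinearMap.id ℝ E2)) x :=
    HasFDerivAt.prodMk (hasFDerivAt_const t x) (hasFDerivAt_id x)
  exact ((hdUc hu i (t,x)).hasFDerivAt).comp x h1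

lemma pd2_eq (hu : ContDiff ℝ 1 (fun p : ℝ × E2 => u p.1 p.2)) (i j : Fin 2) (t : ℝ) (x : E2) :
    pd2 j (fun y => u t y i) x = Amat u i j (t, x) := by
  have h := (slice_x hu i t x).fderiv
  simp [pd2, h, Amat]

lemma slice_t (hu : ContDiff ℝ 1 (fun p : ℝ × E2 => u p.1 p.2)) (i : Fin 2) (x : E2) (t : ℝ) :
    HasDerivAt (fun s => u s x i) (fderiv ℝ (Uc u i) (t,x) ((1:ℝ), (0:E2))) t := by
  have h1 : HasDerivAt (fun s : ℝ => ((s, x) : ℝ × E2)) ((1:ℝ), (0:E2)) t :=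
    HasDerivAt.prodMk (hasDerivAt_id t) (hasDerivAt_const t x)
  exact ((hdUc hu i (t,x)).hasFDerivAt).comp_hasDerivAt t h1

variable {T : ℝ}

lemma norm_const (hu : ContDiff ℝ 1 (fun p : ℝ × E2 => u p.1 p.2))
    (heq : ∀ t ∈ Set.Icc (0 : ℝ) T, ∀ x (i : Fin 2),
      deriv (fun s => u s x i) t +
        (pd2 0 (fun y => u t y 1) x - pd2 1 (fun y => u t y 0) x) *
          (![-(u t x 1), u t x 0] i) = 0)
    (hinit : ∀ x, u 0 x 0 * u 0 x 0 + u 0 x 1 * u 0 x 1 = 1) :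
    ∀ t ∈ Set.Icc (0:ℝ) T, ∀ x, u t x 0 * u t x 0 + u t x 1 * u t x 1 = 1 := by
  intro t ht x
  set n : ℝ → ℝ := fun s => u s x 0 * u s x 0 + u s x 1 * u s x 1 with hn
  have hdiff : ∀ (i : Fin 2) (s : ℝ), HasDerivAt (fun s => u s x i)
      (deriv (fun s => u s x i) s) s := fun i s => (slice_t hu i x s).deriv ▸ slice_t hu i x s
  have hcontc : ∀ i : Fin 2, Continuous fun s => u s x i := fun i =>
    Differentiable.continuous (fun s => (hdiff i s).differentiableAt)
  have hcont : ContinuousOn n (Icc 0 T) :=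
    (((hcontc 0).mul (hcontc 0)).add ((hcontc 1).mul (hcontc 1))).continuousOn
  have hderiv : ∀ s ∈ Ico (0:ℝ) T, HasDerivWithinAt n 0 (Ici s) s := by
    intro s hs
    have hs' : s ∈ Icc (0:ℝ) T := ⟨hs.1, hs.2.le⟩
    have h0 := heq s hs' x 0
    have h1 := heq s hs' x 1
    simp only [Matrix.cons_val_zero, Matrix.cons_val_one, Matrix.head_cons] at h0 h1
    have hD : HasDerivAt n
        ((deriv (fun r => u r x 0) s * u s x 0 + u s x 0 * deriv (fun r => u r x 0) s)
          + (deriv (fun r => u r x 1) s * u s x 1 + u s x 1 * deriv (fun r => u r x 1) s)) s :=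
      ((hdiff 0 s).mul (hdiff 0 s)).add ((hdiff 1 s).mul (hdiff 1 s))
    have hzero : ((deriv (fun r => u r x 0) s * u s x 0 + u s x 0 * deriv (fun r => u r x 0) s)
          + (deriv (fun r => u r x 1) s * u s x 1 + u s x 1 * deriv (fun r => u r x 1) s)) = 0 := by
      linear_combination 2 * u s x 0 * h0 + 2 * u s x 1 * h1
    exact (hzero ▸ hD).hasDerivWithinAt
  have h := constant_of_has_deriv_right_zero hcont hderiv t ht
  exact h.trans (hinit x)

lemma orth (hu : ContDiff ℝ 1 (fun p : ℝ × E2 => u p.1 p.2))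
    (hnorm : ∀ t ∈ Set.Icc (0:ℝ) T, ∀ x, u t x 0 * u t x 0 + u t x 1 * u t x 1 = 1) :
    ∀ t ∈ Set.Icc (0:ℝ) T, ∀ x (j : Fin 2),
      u t x 0 * Amat u 0 j (t,x) + u t x 1 * Amat u 1 j (t,x) = 0 := by
  intro t ht x j
  have h0 := slice_x hu 0 t x
  have h1 := slice_x hu 1 t x
  set G0 := (fderiv ℝ (Uc u 0) (t,x)).comp ((0 : E2 →L[ℝ] ℝ).prod (ContinuousLinearMap.id ℝ E2)) with hG0
  set G1 := (fderiv ℝ (Uc u 1) (t,x)).comp ((0 : E2 →L[ℝ] ℝ).prod (ContinuousLinearMap.id ℝ E2)) with hG1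
  have hs : HasFDerivAt (fun y => u t y 0 * u t y 0 + u t y 1 * u t y 1)
      ((u t x 0 • G0 + u t x 0 • G0) + (u t x 1 • G1 + u t x 1 • G1)) x :=
    (h0.mul h0).add (h1.mul h1)
  have hconst : (fun y => u t y 0 * u t y 0 + u t y 1 * u t y 1) = fun _ => (1:ℝ) :=
    funext fun y => hnorm t ht y
  rw [hconst] at hs
  have hD := hs.unique (hasFDerivAt_const 1 x)
  have happ := congrArg (fun L : E2 →L[ℝ] ℝ => L (Pi.single j 1)) hD
  simp only [ContinuousLinearMap.add_apply, ContinuousLinearMap.smul_apply,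
    ContinuousLinearMap.zero_apply, smul_eq_mul, hG0, hG1, ContinuousLinearMap.comp_apply,
    ContinuousLinearMap.prod_apply, ContinuousLinearMap.id_apply] at happ
  simp only [Amat]
  linarith [happ]

lemma char_const (hu : ContDiff ℝ 1 (fun p : ℝ × E2 => u p.1 p.2))
    (heq : ∀ t ∈ Set.Icc (0 : ℝ) T, ∀ x (i : Fin 2),
      deriv (fun s => u s x i) t +
        (pd2 0 (fun y => u t y 1) x - pd2 1 (fun y => u t y 0) x) *
          (![-(u t x 1), u t x 0] i) = 0)
    (hnorm : ∀ t ∈ Set.Icc (0:ℝ) T, ∀ x, u t x 0 * u t x 0 + u t x 1 * u t x 1 = 1)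
    (x₀ : E2) :
    ∀ t ∈ Set.Icc (0:ℝ) T, u t (x₀ + t • u 0 x₀) = u 0 x₀ := by
  intro t ht
  have hT : (0:ℝ) ≤ T := le_trans ht.1 ht.2
  set v := u 0 x₀ with hv
  set γ : ℝ → E2 := fun s => x₀ + s • v with hγdef
  set c : ℝ → ℝ := fun s => max 0 (min s T) with hcdef
  have hcmem : ∀ s, c s ∈ Icc (0:ℝ) T := fun s => ⟨le_max_left _ _, max_le hT (min_le_right _ _)⟩
  have hceq : ∀ s ∈ Icc (0:ℝ) T, c s = s := fun s hs => by
    simp only [hcdef, min_eq_left hs.2, max_eq_right hs.1]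
  set B : ℝ → Fin 2 → Fin 2 → ℝ := fun s i j => Amat u i j (s, γ s) with hBdef
  have hγcont : Continuous γ := continuous_const.add (continuous_id.smul continuous_const)
  have hBcont : Continuous B := by
    refine continuous_pi fun i => continuous_pi fun j => ?_
    have h1 : Continuous (fderiv ℝ (Uc u i)) := (hUc hu i).continuous_fderiv one_ne_zero
    have h2 : Continuous fun s : ℝ => ((s, γ s) : ℝ × E2) := continuous_id.prodMk hγcont
    exact (h1.comp h2).clm_apply continuous_const
  obtain ⟨C, hC⟩ := (isCompact_Icc : IsCompact (Icc (0:ℝ) T)).exists_bound_of_continuousOn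
    hBcont.continuousOn
  have hC0 : 0 ≤ C := le_trans (norm_nonneg _) (hC 0 ⟨le_refl 0, hT⟩)
  have hCe : ∀ s (i j : Fin 2), |B (c s) i j| ≤ C := by
    intro s i j
    calc |B (c s) i j| ≤ ‖B (c s) i‖ := by
          rw [← Real.norm_eq_abs]; exact norm_le_pi_norm _ j
      _ ≤ ‖B (c s)‖ := norm_le_pi_norm _ i
      _ ≤ C := hC _ (hcmem s)
  set F : ℝ → E2 → E2 :=
    fun s w i => (v 0 - w 0) * B (c s) i 0 + (v 1 - w 1) * B (c s) i 1 with hFdef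
  set K : NNReal := Real.toNNReal (2 * C) with hKdef
  have hKC : (K : ℝ) = 2 * C := Real.coe_toNNReal _ (by linarith)
  have hlip : ∀ s, LipschitzWith K (F s) := by
    intro s
    apply LipschitzWith.of_dist_le_mul
    intro w w'
    rw [hKC]
    refine (dist_pi_le_iff (by positivity)).mpr fun i => ?_
    rw [Real.dist_eq]
    have e0 := hCe s i 0
    have e1 := hCe s i 1
    have d0 : |w' 0 - w 0| ≤ dist w w' := by
      rw [abs_sub_comm, ← Real.dist_eq]; exact dist_le_pi_dist w w' 0
    have d1 : |w' 1 - w 1| ≤ dist w w' := by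
      rw [abs_sub_comm, ← Real.dist_eq]; exact dist_le_pi_dist w w' 1
    have hdiffi : F s w i - F s w' i
        = (w' 0 - w 0) * B (c s) i 0 + (w' 1 - w 1) * B (c s) i 1 := by
      simp only [hFdef]; ring
    rw [hdiffi]
    calc |(w' 0 - w 0) * B (c s) i 0 + (w' 1 - w 1) * B (c s) i 1|
        ≤ |(w' 0 - w 0) * B (c s) i 0| + |(w' 1 - w 1) * B (c s) i 1| := abs_add_le _ _
      _ = |w' 0 - w 0| * |B (c s) i 0| + |w' 1 - w 1| * |B (c s) i 1| := by
          rw [abs_mul, abs_mul]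
      _ ≤ dist w w' * C + dist w w' * C :=
          add_le_add (mul_le_mul d0 e0 (abs_nonneg _) dist_nonneg)
            (mul_le_mul d1 e1 (abs_nonneg _) dist_nonneg)
      _ = 2 * C * dist w w' := by ring
  set f : ℝ → E2 := fun s => u s (γ s) with hfdef
  have hγder : ∀ s, HasDerivAt γ v s := by
    intro s
    have h1 : HasDerivAt (fun r : ℝ => r • v) ((1:ℝ) • v) s := (hasDerivAt_id s).smul_const v
    have h2 := HasDerivAt.const_add x₀ h1; rw [one_smul] at h2; exact h2
  have hfC : ∀ (i : Fin 2) s, HasDerivAt (fun r => u r (γ r) i)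
      (fderiv ℝ (Uc u i) (s, γ s) ((1:ℝ), v)) s := by
    intro i s
    have h1 : HasDerivAt (fun r : ℝ => ((r, γ r) : ℝ × E2)) ((1:ℝ), v) s :=
      HasDerivAt.prodMk (hasDerivAt_id s) (hγder s)
    exact ((hdUc hu i (s, γ s)).hasFDerivAt).comp_hasDerivAt s h1
  have hdec : ∀ (i : Fin 2) (p : ℝ × E2), fderiv ℝ (Uc u i) p ((1:ℝ), v)
      = fderiv ℝ (Uc u i) p ((1:ℝ), (0:E2)) + v 0 * Amat u i 0 p + v 1 * Amat u i 1 p := by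
    intro i p
    have hv2 : ((1:ℝ), v) = ((1:ℝ), (0:E2)) + v 0 • ((0:ℝ), (Pi.single 0 1 : E2))
        + v 1 • ((0:ℝ), (Pi.single 1 1 : E2)) := by
      refine Prod.ext ?_ ?_
      · simp
      · funext k; fin_cases k <;> simp
    rw [hv2, map_add, map_add, map_smul, map_smul, smul_eq_mul, smul_eq_mul]
    simp [Amat]
  have hfder : ∀ s ∈ Ico (0:ℝ) T, HasDerivWithinAt f (F s (f s)) (Ici s) s := by
    intro s hs
    have hs' : s ∈ Icc (0:ℝ) T := ⟨hs.1, hs.2.le⟩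
    have hcs : c s = s := hceq s hs'
    have hDA : HasDerivAt f (F s (f s)) s := by
      rw [hasDerivAt_pi]
      intro i
      have h := hfC i s
      have hval : fderiv ℝ (Uc u i) (s, γ s) ((1:ℝ), v) = F s (f s) i := by
        rw [hdec]
        have hder : deriv (fun r => u r (γ s) i) s
            = fderiv ℝ (Uc u i) (s, γ s) ((1:ℝ), (0:E2)) := (slice_t hu i (γ s) s).deriv
        have hp := heq s hs' (γ s) i
        rw [pd2_eq hu 1 0 s (γ s), pd2_eq hu 0 1 s (γ s), hder] at hp
        have ho0 := orth hu hnorm s hs' (γ s) 0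
        have ho1 := orth hu hnorm s hs' (γ s) 1
        simp only [hFdef, hfdef, hcs, hBdef]
        fin_cases i
        · simp only [Fin.zero_eta, Fin.isValue, Matrix.cons_val_zero] at hp ⊢
          linear_combination hp + ho0
        · simp only [Fin.mk_one, Fin.isValue, Matrix.cons_val_one, Matrix.head_cons, Matrix.cons_val_zero] at hp ⊢
          linear_combination hp + ho1
      rw [hval] at h
      exact h
    exact hDA.hasDerivWithinAt
  have hgder : ∀ s ∈ Ico (0:ℝ) T,
      HasDerivWithinAt (fun _ : ℝ => v) (F s ((fun _ : ℝ => v) s)) (Ici s) s := by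
    intro s hs
    have hz : F s v = 0 := by funext i; simp [hFdef]
    simpa [hz] using (hasDerivWithinAt_const s (Ici s) v)
  have hfcont : ContinuousOn f (Icc 0 T) := by
    apply Continuous.continuousOn
    exact continuous_pi fun i => Differentiable.continuous fun s => (hfC i s).differentiableAt
  have hinit0 : f 0 = v := by simp [hfdef, hγdef, hv]
  have hEq := ODE_solution_unique hlip hfcont hfder continuousOn_const hgder hinit0 ht
  exact hEq


end helpers

/-- There exists smooth `2π`-periodic initial data for which the 2D inviscid
rotational Burgers equation `∂ₜu + ω u^⊥ = 0` (with `ω = ∂ₓu₂ − ∂ᵧu₁`,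
`u^⊥ = (−u₂, u₁)`) develops a singularity in finite time: no `C¹` solution
exists beyond some finite time `Tb`. -/
theorem inviscid_rotational_burgers_2D_blowup :
    ∃ u₀ : (Fin 2 → ℝ) → (Fin 2 → ℝ),
      ContDiff ℝ (⊤ : ℕ∞) u₀ ∧
      (∀ x (j : Fin 2), u₀ (x + Pi.single j (2 * Real.pi)) = u₀ x) ∧
      ∃ Tb : ℝ, 0 < Tb ∧ ∀ T : ℝ, Tb < T →
        ¬ ∃ u : ℝ → (Fin 2 → ℝ) → (Fin 2 → ℝ),
          ContDiff ℝ 1 (fun p : ℝ × (Fin 2 → ℝ) => u p.1 p.2) ∧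
          (∀ x, u 0 x = u₀ x) ∧
          (∀ t ∈ Set.Icc (0 : ℝ) T, ∀ x (i : Fin 2),
            deriv (fun s => u s x i) t +
              (pd2 0 (fun y => u t y 1) x - pd2 1 (fun y => u t y 0) x) *
                (![-(u t x 1), u t x 0] i) = 0) := by
  refine ⟨fun x => ![Real.cos (x 0), Real.sin (x 0)], ?_, ?_, Real.pi / 2,
    by positivity, ?_⟩
  · refine contDiff_pi.mpr fun i => ?_
    fin_cases i
    · simp only [Fin.zero_eta, Matrix.cons_val_zero]
      exact Real.contDiff_cos.comp (contDiff_pi.mp contDiff_id 0)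
    · simp only [Fin.mk_one, Matrix.cons_val_one, Matrix.head_cons]
      exact Real.contDiff_sin.comp (contDiff_pi.mp contDiff_id 0)
  · intro x j
    have hx0 : ((x + Pi.single j (2 * Real.pi) : Fin 2 → ℝ)) 0 = x 0 + (Pi.single j (2 * Real.pi) : Fin 2 → ℝ) 0 := rfl
    fin_cases j
    · funext i
      fin_cases i <;>
        simp [hx0, Pi.single_eq_same, Real.cos_add_two_pi, Real.sin_add_two_pi]
    · funext i
      fin_cases i <;> simp [hx0, Pi.single_eq_of_ne (by decide : (0:Fin 2) ≠ 1)]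
  · intro T hT
    rintro ⟨u, hu, hinit, heq⟩
    have hπ : (0:ℝ) < Real.pi / 2 := by positivity
    have hmem : Real.pi / 2 ∈ Set.Icc (0:ℝ) T := ⟨hπ.le, hT.le⟩
    have hinit1 : ∀ x, u 0 x 0 * u 0 x 0 + u 0 x 1 * u 0 x 1 = 1 := by
      intro x
      rw [hinit x]
      simp only [Matrix.cons_val_zero, Matrix.cons_val_one, Matrix.head_cons]
      nlinarith [Real.sin_sq_add_cos_sq (x 0)]
    have hnorm := norm_const hu heq hinit1
    set a : E2 := 0 with hadef
    set b : E2 := Pi.single 0 Real.pi with hbdef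
    have h1 := char_const hu heq hnorm a (Real.pi / 2) hmem
    have h2 := char_const hu heq hnorm b (Real.pi / 2) hmem
    have hua : u 0 a = ![Real.cos 0, Real.sin 0] := by
      rw [hinit a]; simp [hadef]
    have hub : u 0 b = ![Real.cos Real.pi, Real.sin Real.pi] := by
      rw [hinit b]; simp [hbdef, Pi.single_eq_same]
    have hpoint : a + (Real.pi / 2) • u 0 a = b + (Real.pi / 2) • u 0 b := by
      rw [hua, hub]
      funext i
      fin_cases i <;>
        simp [hadef, hbdef, Pi.single_eq_same,
          Pi.single_eq_of_ne (by decide : (1:Fin 2) ≠ 0)] <;> ring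
    have hcontr : u 0 a = u 0 b := by rw [← h1, ← h2, hpoint]
    rw [hua, hub] at hcontr
    have := congrFun hcontr 0
    simp only [Matrix.cons_val_zero, Real.cos_zero, Real.cos_pi] at this
    norm_num at this
end

section
/- Let u be a smooth solution of ∂ₜu + (∇×u)×u = νΔu + f on 𝕋³ × [a,b] with ν > 0. Then sup_{t∈[a,b]} ‖u(t)‖_{L^∞} ≤ ‖u(a)‖_{L^∞} + ∫ₐᵇ ‖f(s)‖_{L^∞} ds. -/
noncomputable def pd (i : Fin 3) (f : (Fin 3 → ℝ) → ℝ) (x : Fin 3 → ℝ) : ℝ :=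
  fderiv ℝ f x (Pi.single i 1)

noncomputable def curl3 (u : (Fin 3 → ℝ) → (Fin 3 → ℝ)) (x : Fin 3 → ℝ) : Fin 3 → ℝ :=
  ![pd 1 (fun y => u y 2) x - pd 2 (fun y => u y 1) x,
    pd 2 (fun y => u y 0) x - pd 0 (fun y => u y 2) x,
    pd 0 (fun y => u y 1) x - pd 1 (fun y => u y 0) x]

noncomputable def lap3 (f : (Fin 3 → ℝ) → ℝ) (x : Fin 3 → ℝ) : ℝ :=
  ∑ j, pd j (pd j f) x
open MeasureTheory

section Aux

abbrev E3 := Fin 3 → ℝ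

def KK : Set E3 := Set.Icc (0 : E3) (fun _ => 2 * Real.pi)

lemma KK_compact : IsCompact KK := isCompact_Icc

lemma KK_zero_mem : (0 : E3) ∈ KK :=
  ⟨le_refl 0, fun _ => by positivity⟩

lemma KK_nonempty : KK.Nonempty := ⟨0, KK_zero_mem⟩

lemma per_int {g : E3 → ℝ} (hper : ∀ x (j : Fin 3), g (x + Pi.single j (2 * Real.pi)) = g x) :
    ∀ (n : ℤ) (x) (j : Fin 3), g (x + Pi.single j ((2 * Real.pi) * n)) = g x := by
  intro n
  induction n using Int.induction_on with
  | zero => intro x j; simp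
  | succ k ih =>
      intro x j
      have he : x + Pi.single j ((2 * Real.pi) * ((k:ℤ) + 1 : ℤ)) =
          (x + Pi.single j ((2 * Real.pi) * (k:ℤ))) + Pi.single j (2 * Real.pi) := by
        rw [add_assoc, ← Pi.single_add]
        norm_num
        ring_nf
      rw [he, hper, ih]
  | pred k ih =>
      intro x j
      have he : (x + Pi.single j ((2 * Real.pi) * (-(k:ℤ) - 1 : ℤ))) + Pi.single j (2 * Real.pi) =
          x + Pi.single j ((2 * Real.pi) * (-(k:ℤ) : ℤ)) := by
        rw [add_assoc, ← Pi.single_add]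
        norm_num
        ring_nf
      calc g (x + Pi.single j ((2 * Real.pi) * (-(k:ℤ) - 1 : ℤ)))
          = g ((x + Pi.single j ((2 * Real.pi) * (-(k:ℤ) - 1 : ℤ))) + Pi.single j (2 * Real.pi)) :=
            (hper _ j).symm
        _ = g x := by rw [he]; exact ih x j

lemma per_reduce {g : E3 → ℝ} (hper : ∀ x (j : Fin 3), g (x + Pi.single j (2 * Real.pi)) = g x)
    (x : E3) : ∃ y ∈ KK, g y = g x := by
  have hπ : (0:ℝ) < 2 * Real.pi := by positivity
  set c : Fin 3 → ℤ := fun j => ⌊x j / (2 * Real.pi)⌋ with hc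
  set y : E3 := fun j => x j - (c j : ℝ) * (2 * Real.pi) with hy
  refine ⟨y, ⟨fun j => ?_, fun j => ?_⟩, ?_⟩
  · simpa [hy, hc] using Int.sub_floor_div_mul_nonneg (x j) hπ
  · simpa [hy, hc] using (Int.sub_floor_div_mul_lt (x j) hπ).le
  · have key : ((y + Pi.single 0 ((2*Real.pi) * (c 0 : ℤ))) + Pi.single 1 ((2*Real.pi) * (c 1 : ℤ)))
        + Pi.single 2 ((2*Real.pi) * (c 2 : ℤ)) = x := by
      funext j
      fin_cases j <;>
        simp [hy, Pi.single_apply, Fin.ext_iff] <;> ring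
    calc g y = g (((y + Pi.single 0 ((2*Real.pi) * (c 0 : ℤ))) + Pi.single 1 ((2*Real.pi) * (c 1 : ℤ)))
        + Pi.single 2 ((2*Real.pi) * (c 2 : ℤ))) := by
          rw [per_int hper, per_int hper, per_int hper]
      _ = g x := by rw [key]

lemma sup_attained {g : E3 → ℝ} (hg : Continuous g)
    (hper : ∀ x (j : Fin 3), g (x + Pi.single j (2 * Real.pi)) = g x) :
    ∃ x₀, (∀ x, g x ≤ g x₀) ∧ (⨆ x, g x) = g x₀ := by
  obtain ⟨x₀, hx₀K, hmaxK⟩ := KK_compact.exists_isMaxOn KK_nonempty hg.continuousOn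
  have hglob : ∀ x, g x ≤ g x₀ := by
    intro x
    obtain ⟨y, hyK, hyeq⟩ := per_reduce hper x
    rw [← hyeq]
    exact hmaxK hyK
  refine ⟨x₀, hglob, le_antisymm (ciSup_le hglob) (le_ciSup ⟨g x₀, ?_⟩ x₀)⟩
  rintro v ⟨z, rfl⟩
  exact hglob z

lemma bdd_range {g : E3 → ℝ} (hg : Continuous g)
    (hper : ∀ x (j : Fin 3), g (x + Pi.single j (2 * Real.pi)) = g x) :
    BddAbove (Set.range g) := by
  obtain ⟨x₀, h, _⟩ := sup_attained hg hper
  exact ⟨g x₀, by rintro v ⟨z, rfl⟩; exact h z⟩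

lemma sup_eq_sSup_image {g : E3 → ℝ} (hg : Continuous g)
    (hper : ∀ x (j : Fin 3), g (x + Pi.single j (2 * Real.pi)) = g x) :
    (⨆ x, g x) = sSup (g '' KK) := by
  obtain ⟨x₀, hglob, hsup⟩ := sup_attained hg hper
  obtain ⟨y₀, hy₀K, hy₀⟩ := per_reduce hper x₀
  rw [hsup, ← hy₀]
  apply le_antisymm
  · exact le_csSup (KK_compact.image_of_continuousOn hg.continuousOn).bddAbove
      (Set.mem_image_of_mem g hy₀K)
  · apply csSup_le (KK_nonempty.image g)
    rintro v ⟨z, _, rfl⟩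
    rw [hy₀]; exact hglob z

lemma second_test {h : ℝ → ℝ} (hh : ContDiff ℝ ((⊤:ℕ∞):WithTop ℕ∞) h) (hmax : ∀ s, h s ≤ h 0) :
    deriv (deriv h) 0 ≤ 0 := by
  by_contra hc
  push_neg at hc
  have hd' : ContDiff ℝ ((⊤:ℕ∞):WithTop ℕ∞) (deriv h) := (contDiff_infty_iff_deriv.mp hh).2
  have h'0 : deriv h 0 = 0 := by
    have : IsLocalMax h 0 := Filter.Eventually.of_forall hmax
    exact this.deriv_eq_zero
  have hD : HasDerivAt (deriv h) (deriv (deriv h) 0) 0 :=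
    (hd'.differentiable (by simp)).differentiableAt.hasDerivAt
  have hslope : Filter.Tendsto (fun s => deriv h s / s) (nhdsWithin 0 {(0:ℝ)}ᶜ)
      (nhds (deriv (deriv h) 0)) := by
    have := hasDerivAt_iff_tendsto_slope.mp hD
    have heq : (slope (deriv h) 0) = fun s => deriv h s / s := by
      funext s; rw [slope_def_field]; simp [h'0, div_eq_inv_mul]
    rwa [heq] at this
  have hev : ∀ᶠ s in nhdsWithin (0:ℝ) (Set.Ioi 0), 0 < deriv h s := by
    have h2 : Filter.Tendsto (fun s => deriv h s / s) (nhdsWithin 0 (Set.Ioi 0))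
        (nhds (deriv (deriv h) 0)) :=
      hslope.mono_left (nhdsWithin_mono _ (fun x hx => ne_of_gt hx))
    have h3 : ∀ᶠ s in nhdsWithin (0:ℝ) (Set.Ioi 0), 0 < deriv h s / s :=
      h2.eventually (eventually_gt_nhds hc)
    filter_upwards [h3, self_mem_nhdsWithin] with s hs hs'
    have hspos : (0:ℝ) < s := hs'
    by_contra hle
    push_neg at hle
    exact absurd hs (not_lt.mpr (div_nonpos_of_nonpos_of_nonneg hle hspos.le))
  obtain ⟨δ, hδ, hδ'⟩ := (nhdsGT_basis (0:ℝ)).eventually_iff.mp hev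
  have hmono : StrictMonoOn h (Set.Ico 0 δ) := by
    apply strictMonoOn_of_deriv_pos (convex_Ico 0 δ) ((hh.continuous).continuousOn)
    intro s hs
    rw [interior_Ico] at hs
    exact hδ' hs
  have : h 0 < h (δ/2) := hmono ⟨le_refl 0, hδ⟩ ⟨by positivity, by linarith⟩ (by positivity)
  exact absurd (hmax (δ/2)) (not_le.mpr this)

lemma leftmax {g : ℝ → ℝ} {a t₀ t₁ d : ℝ} (ha : a < t₀) (ht : t₀ ≤ t₁)
    (hmax : ∀ s ∈ Set.Icc a t₁, g s ≤ g t₀) (hd : HasDerivAt g d t₀) : 0 ≤ d := by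
  have hs : Filter.Tendsto (slope g t₀) (nhdsWithin t₀ (Set.Iio t₀)) (nhds d) :=
    (hasDerivAt_iff_tendsto_slope.mp hd).mono_left
      (nhdsWithin_mono _ (fun x hx => ne_of_lt hx))
  have hev : ∀ᶠ s in nhdsWithin t₀ (Set.Iio t₀), 0 ≤ slope g t₀ s := by
    have hIoo : Set.Ioo a t₀ ∈ nhdsWithin t₀ (Set.Iio t₀) :=
      mem_nhdsWithin.mpr ⟨Set.Ioi a, isOpen_Ioi, ha, fun x hx => ⟨hx.1, hx.2⟩⟩
    filter_upwards [hIoo] with s hs'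
    rw [slope_def_field]
    have h1 : g s - g t₀ ≤ 0 := sub_nonpos.mpr (hmax s ⟨hs'.1.le, hs'.2.le.trans ht⟩)
    have h2 : s - t₀ < 0 := sub_neg.mpr hs'.2
    exact div_nonneg_of_nonpos h1 h2.le
  exact ge_of_tendsto hs hev

lemma pd_contDiff {g : E3 → ℝ} (hg : ContDiff ℝ ((⊤:ℕ∞):WithTop ℕ∞) g) (j : Fin 3) :
    ContDiff ℝ ((⊤:ℕ∞):WithTop ℕ∞) (pd j g) := by
  show ContDiff ℝ _ fun x => fderiv ℝ g x (Pi.single j 1)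
  exact (hg.fderiv_right (le_refl _)).clm_apply contDiff_const

lemma pd_sum_sq {U : E3 → E3} (hU : ∀ i, ContDiff ℝ ((⊤:ℕ∞):WithTop ℕ∞) (fun x => U x i))
    (j : Fin 3) :
    pd j (fun x => ∑ i, (U x i)^2) =
      fun x => ∑ i, 2 * U x i * pd j (fun y => U y i) x := by
  funext x
  have hs : HasFDerivAt (fun x => ∑ i, (U x i)^2)
      (∑ i, ((2:ℝ) * U x i) • fderiv ℝ (fun y => U y i) x) x := by
    have key : ∀ i ∈ Finset.univ, HasFDerivAt (fun x => (U x i)^2)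
        (((2:ℝ) * U x i) • fderiv ℝ (fun y => U y i) x) x := by
      intro i _
      have hD : HasFDerivAt (fun y => U y i) (fderiv ℝ (fun y => U y i) x) x :=
        ((hU i).differentiable (by simp) x).hasFDerivAt
      have := hD.mul hD
      have heq : (fun x => (U x i)^2) = fun x => U x i * U x i := by
        funext z; ring
      rw [heq]
      have h2 : ((2:ℝ) * U x i) • fderiv ℝ (fun y => U y i) x = U x i • fderiv ℝ (fun y => U y i) x + U x i • fderiv ℝ (fun y => U y i) x := by
        rw [two_mul, add_smul]
      rw [h2]; exact this
    exact HasFDerivAt.fun_sum key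
  rw [show pd j (fun x => ∑ i, (U x i)^2) x
      = fderiv ℝ (fun x => ∑ i, (U x i)^2) x (Pi.single j 1) from rfl, hs.fderiv]
  simp [pd, ContinuousLinearMap.sum_apply, smul_eq_mul, mul_assoc]

lemma lap_sum_sq {U : E3 → E3} (hU : ∀ i, ContDiff ℝ ((⊤:ℕ∞):WithTop ℕ∞) (fun x => U x i))
    (x₀ : E3) :
    lap3 (fun x => ∑ i, (U x i)^2) x₀ =
      2 * ∑ i, U x₀ i * lap3 (fun y => U y i) x₀ +
      2 * ∑ j, ∑ i, (pd j (fun y => U y i) x₀)^2 := by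
  have main : ∀ j : Fin 3, pd j (pd j (fun x => ∑ i, (U x i)^2)) x₀ =
      ∑ i, (2 * (pd j (fun y => U y i) x₀)^2 + 2 * (U x₀ i * pd j (pd j (fun y => U y i)) x₀)) := by
    intro j
    rw [pd_sum_sq hU j]
    have hs : HasFDerivAt (fun x => ∑ i, 2 * U x i * pd j (fun y => U y i) x)
        (∑ i, ((2 * U x₀ i) • fderiv ℝ (pd j (fun y => U y i)) x₀ +
          (2 * pd j (fun y => U y i) x₀) • fderiv ℝ (fun y => U y i) x₀)) x₀ := by
      apply HasFDerivAt.fun_sum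
      intro i _
      have hD1 : HasFDerivAt (fun y => U y i) (fderiv ℝ (fun y => U y i) x₀) x₀ :=
        ((hU i).differentiable (by simp) x₀).hasFDerivAt
      have hD2 : HasFDerivAt (pd j (fun y => U y i)) (fderiv ℝ (pd j (fun y => U y i)) x₀) x₀ :=
        (((pd_contDiff (hU i) j)).differentiable (by simp) x₀).hasFDerivAt
      have := (hD1.mul hD2).const_mul (2:ℝ)
      have e : ((2 * U x₀ i) • fderiv ℝ (pd j fun y => U y i) x₀
          + (2 * pd j (fun y => U y i) x₀) • fderiv ℝ (fun y => U y i) x₀)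
          = (2:ℝ) • (U x₀ i • fderiv ℝ (pd j fun y => U y i) x₀
            + pd j (fun y => U y i) x₀ • fderiv ℝ (fun y => U y i) x₀) := by
        rw [smul_add, smul_smul, smul_smul]
      rw [e, show (fun y => 2 * U y i * pd j (fun y => U y i) y)
          = fun y => 2 * ((fun y => U y i) * pd j fun y => U y i) y from by
            funext z; simp only [Pi.mul_apply]; ring]
      exact this
    rw [show pd j (fun x => ∑ i, 2 * U x i * pd j (fun y => U y i) x) x₀ =
        fderiv ℝ (fun x => ∑ i, 2 * U x i * pd j (fun y => U y i) x) x₀ (Pi.single j 1) from rfl,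
      hs.fderiv]
    simp only [ContinuousLinearMap.sum_apply, ContinuousLinearMap.add_apply,
      ContinuousLinearMap.smul_apply, smul_eq_mul]
    apply Finset.sum_congr rfl
    intro i _
    have h1 : fderiv ℝ (pd j fun y => U y i) x₀ (Pi.single j 1)
        = pd j (pd j fun y => U y i) x₀ := rfl
    have h2 : fderiv ℝ (fun y => U y i) x₀ (Pi.single j 1) = pd j (fun y => U y i) x₀ := rfl
    rw [h1, h2]; ring
  show (∑ j, pd j (pd j (fun x => ∑ i, (U x i)^2)) x₀) = _
  rw [Finset.sum_congr rfl (fun j _ => main j)]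
  simp only [lap3, Fin.sum_univ_three]
  ring

lemma line_deriv {Q : E3 → ℝ} (hQ : ContDiff ℝ ((⊤:ℕ∞):WithTop ℕ∞) Q) (x₀ : E3) (j : Fin 3) :
    deriv (fun s : ℝ => Q (x₀ + s • (Pi.single j (1:ℝ) : E3))) =
      fun s => pd j Q (x₀ + s • (Pi.single j (1:ℝ) : E3)) := by
  funext s
  have hl : HasDerivAt (fun s : ℝ => x₀ + s • (Pi.single j (1:ℝ) : E3)) (Pi.single j 1) s := by
    simpa using ((hasDerivAt_id s).smul_const (Pi.single j 1 : E3)).const_add x₀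
  have hD : HasDerivAt (fun s : ℝ => Q (x₀ + s • (Pi.single j (1:ℝ) : E3)))
      (fderiv ℝ Q (x₀ + s • (Pi.single j (1:ℝ) : E3)) (Pi.single j 1)) s :=
    (hQ.differentiable (by simp) _).hasFDerivAt.comp_hasDerivAt s hl
  exact hD.deriv

lemma pd_pd_nonpos {P : E3 → ℝ} (hP : ContDiff ℝ ((⊤:ℕ∞):WithTop ℕ∞) P) {x₀ : E3}
    (hmax : ∀ x, P x ≤ P x₀) (j : Fin 3) : pd j (pd j P) x₀ ≤ 0 := by
  have hline : ContDiff ℝ ((⊤:ℕ∞):WithTop ℕ∞) (fun s : ℝ => x₀ + s • (Pi.single j (1:ℝ) : E3)) :=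
    contDiff_const.add (contDiff_id.smul contDiff_const)
  have hh : ContDiff ℝ ((⊤:ℕ∞):WithTop ℕ∞) (fun s : ℝ => P (x₀ + s • (Pi.single j (1:ℝ) : E3))) :=
    hP.comp hline
  have hmax' : ∀ s : ℝ, P (x₀ + s • (Pi.single j (1:ℝ) : E3))
      ≤ (fun s : ℝ => P (x₀ + s • (Pi.single j (1:ℝ) : E3))) 0 := by
    intro s; simp only; rw [show x₀ + (0:ℝ) • (Pi.single j (1:ℝ) : E3) = x₀ by simp]
    exact hmax _
  have := second_test hh hmax'
  rw [line_deriv hP x₀ j] at this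
  have h2 : deriv (fun s : ℝ => pd j P (x₀ + s • (Pi.single j (1:ℝ) : E3))) 0
      = pd j (pd j P) x₀ := by
    rw [line_deriv (pd_contDiff hP j) x₀ j]
    simp
  rwa [h2] at this

lemma cross_orth (v w : Fin 3 → ℝ) : ∑ i, (crossProduct v) w i * w i = 0 := by
  rw [cross_apply]
  simp [Fin.sum_univ_three]
  ring

lemma sqrt_sum_le (c d : ℝ) (hd : 0 ≤ d) : Real.sqrt (c + d) ≤ Real.sqrt c + Real.sqrt d := by
  rcases le_or_gt c 0 with hc | hc
  · calc Real.sqrt (c + d) ≤ Real.sqrt d := Real.sqrt_le_sqrt (by linarith)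
      _ ≤ _ := le_add_of_nonneg_left (Real.sqrt_nonneg c)
  · have h1 : c + d ≤ (Real.sqrt c + Real.sqrt d)^2 := by
      have := Real.sq_sqrt hc.le
      have := Real.sq_sqrt hd
      nlinarith [Real.sqrt_nonneg c, Real.sqrt_nonneg d, mul_nonneg (Real.sqrt_nonneg c) (Real.sqrt_nonneg d)]
    calc Real.sqrt (c + d) ≤ Real.sqrt ((Real.sqrt c + Real.sqrt d)^2) := Real.sqrt_le_sqrt h1
      _ = |Real.sqrt c + Real.sqrt d| := Real.sqrt_sq_eq_abs _
      _ = _ := abs_of_nonneg (by positivity)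

end Aux

/-- Maximum principle for the viscous rotational Burgers equation: a smooth
periodic solution of `∂ₜu + (∇×u)×u = νΔu + f` on `𝕋³ × [a,b]` satisfies
`sup_{t∈[a,b]} ‖u(t)‖_{L^∞} ≤ ‖u(a)‖_{L^∞} + ∫ₐᵇ ‖f(s)‖_{L^∞} ds`. -/
theorem maximum_principle_viscous
    (ν a b : ℝ) (hν : 0 < ν) (hab : a < b)
    (u f : ℝ → (Fin 3 → ℝ) → (Fin 3 → ℝ))
    (hu : ContDiff ℝ (⊤ : ℕ∞) fun p : ℝ × (Fin 3 → ℝ) => u p.1 p.2)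
    (hf : Continuous fun p : ℝ × (Fin 3 → ℝ) => f p.1 p.2)
    (hperu : ∀ t x (j : Fin 3), u t (x + Pi.single j (2 * Real.pi)) = u t x)
    (hperf : ∀ t x (j : Fin 3), f t (x + Pi.single j (2 * Real.pi)) = f t x)
    (hpde : ∀ t ∈ Set.Icc a b, ∀ x i,
      deriv (fun s => u s x i) t + crossProduct (curl3 (u t) x) (u t x) i =
        ν * lap3 (fun y => u t y i) x + f t x i)
    (hfint : IntervalIntegrable
      (fun s => ⨆ x : Fin 3 → ℝ, Real.sqrt (∑ i, (f s x i) ^ 2)) volume a b) :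
    ∀ t ∈ Set.Icc a b,
      (⨆ x : Fin 3 → ℝ, Real.sqrt (∑ i, (u t x i) ^ 2)) ≤
        (⨆ x : Fin 3 → ℝ, Real.sqrt (∑ i, (u a x i) ^ 2)) +
          ∫ s in a..b, ⨆ x : Fin 3 → ℝ, Real.sqrt (∑ i, (f s x i) ^ 2) := by
  have hu' : ContDiff ℝ ((⊤:ℕ∞):WithTop ℕ∞) (fun p : ℝ × E3 => u p.1 p.2) := hu.of_le (by simp)
  have hucont : Continuous fun p : ℝ × E3 => u p.1 p.2 := hu'.continuous
  have hui : ∀ i, ContDiff ℝ ((⊤:ℕ∞):WithTop ℕ∞) fun p : ℝ × E3 => u p.1 p.2 i :=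
    fun i => (contDiff_pi.mp hu') i
  have hut : ∀ t i, ContDiff ℝ ((⊤:ℕ∞):WithTop ℕ∞) fun x : E3 => u t x i :=
    fun t i => (hui i).comp (contDiff_const.prodMk contDiff_id)
  have hux : ∀ (x : E3) i, ContDiff ℝ ((⊤:ℕ∞):WithTop ℕ∞) fun s : ℝ => u s x i :=
    fun x i => (hui i).comp (contDiff_id.prodMk contDiff_const)
  -- the sup of |f|
  set F : ℝ → ℝ := fun s => ⨆ x : E3, Real.sqrt (∑ i, (f s x i) ^ 2) with hF
  have hfc : ∀ t i, Continuous fun x : E3 => f t x i := fun t i =>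
    (continuous_apply i).comp (hf.comp (Continuous.prodMk_right t))
  have hGf : ∀ t, Continuous fun x : E3 => Real.sqrt (∑ i, (f t x i)^2) := fun t =>
    Real.continuous_sqrt.comp (continuous_finset_sum _ fun i _ => (hfc t i).pow 2)
  have hGfper : ∀ t x (j : Fin 3),
      Real.sqrt (∑ i, (f t (x + Pi.single j (2*Real.pi)) i)^2)
        = Real.sqrt (∑ i, (f t x i)^2) := by
    intro t x j; rw [hperf]
  have hFbdd : ∀ t, BddAbove (Set.range fun x : E3 => Real.sqrt (∑ i, (f t x i)^2)) :=
    fun t => bdd_range (hGf t) (hGfper t)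
  have hFle : ∀ t x, Real.sqrt (∑ i, (f t x i)^2) ≤ F t := fun t x => le_ciSup (hFbdd t) x
  have hFnonneg : ∀ t, 0 ≤ F t := fun t => (Real.sqrt_nonneg _).trans (hFle t 0)
  have hFcont : Continuous F := by
    have hjoint : Continuous fun p : ℝ × E3 => Real.sqrt (∑ i, (f p.1 p.2 i)^2) :=
      Real.continuous_sqrt.comp (continuous_finset_sum _ fun i _ =>
        ((continuous_apply i).comp hf).pow 2)
    have h1 : Continuous fun t => sSup ((fun x : E3 => Real.sqrt (∑ i, (f t x i)^2)) '' KK) :=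
      KK_compact.continuous_sSup hjoint
    exact h1.congr fun t => (sup_eq_sSup_image (hGf t) (hGfper t)).symm
  -- continuity / boundedness of spatial sups of u
  have huc : ∀ t i, Continuous fun x : E3 => u t x i := fun t i =>
    ((hut t i)).continuous
  have hGu : ∀ (ε : ℝ) t, Continuous fun x : E3 => Real.sqrt (ε + ∑ i, (u t x i)^2) := fun ε t =>
    Real.continuous_sqrt.comp (continuous_const.add
      (continuous_finset_sum _ fun i _ => (huc t i).pow 2))
  have hGuper : ∀ (ε : ℝ) t, ∀ x (j : Fin 3),
      Real.sqrt (ε + ∑ i, (u t (x + Pi.single j (2*Real.pi)) i)^2)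
        = Real.sqrt (ε + ∑ i, (u t x i)^2) := by
    intro ε t x j; rw [hperu]
  have hGuper0 : ∀ t, ∀ x (j : Fin 3),
      Real.sqrt (∑ i, (u t (x + Pi.single j (2*Real.pi)) i)^2)
        = Real.sqrt (∑ i, (u t x i)^2) := by
    intro t x j; rw [hperu]
  have hGu0 : ∀ t, Continuous fun x : E3 => Real.sqrt (∑ i, (u t x i)^2) := fun t =>
    Real.continuous_sqrt.comp (continuous_finset_sum _ fun i _ => (huc t i).pow 2)
  -- the ε-regularized claim
  have claim : ∀ ε > (0:ℝ), ∀ t₁ ∈ Set.Icc a b, ∀ x₁ : E3,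
      Real.sqrt (ε + ∑ i, (u t₁ x₁ i)^2) ≤
        (⨆ y : E3, Real.sqrt (ε + ∑ i, (u a y i)^2)) + ∫ s in a..t₁, (F s + ε) := by
    intro ε hε t₁ ht₁ x₁
    set Wa : ℝ := ⨆ y : E3, Real.sqrt (ε + ∑ i, (u a y i)^2) with hWadef
    set I : ℝ → ℝ := fun t => ∫ s in a..t, (F s + ε) with hIdef
    have hIder : ∀ t : ℝ, HasDerivAt I (F t + ε) t := fun t =>
      ((hFcont.add continuous_const).integral_hasStrictDerivAt a t).hasDerivAt
    have hIcont : Continuous I := by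
      have : Differentiable ℝ I := fun t => (hIder t).differentiableAt
      exact this.continuous
    have hIa : I a = 0 := intervalIntegral.integral_same
    have hsqpos : ∀ t (x : E3), 0 < ε + ∑ i, (u t x i)^2 := by
      intro t x
      have : (0:ℝ) ≤ ∑ i, (u t x i)^2 := Finset.sum_nonneg fun i _ => sq_nonneg _
      linarith
    have hWa_le : ∀ y : E3, Real.sqrt (ε + ∑ i, (u a y i)^2) ≤ Wa := fun y =>
      le_ciSup (bdd_range (hGu ε a) (hGuper ε a)) y
    by_contra hcon
    push_neg at hcon
    set v : ℝ × E3 → ℝ := fun p => Real.sqrt (ε + ∑ i, (u p.1 p.2 i)^2) - I p.1 with hvdef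
    have hvcont : Continuous v := by
      apply Continuous.sub
      · exact Real.continuous_sqrt.comp (continuous_const.add
          (continuous_finset_sum _ fun i _ => ((continuous_apply i).comp hucont).pow 2))
      · exact hIcont.comp continuous_fst
    have hC : IsCompact (Set.Icc a t₁ ×ˢ KK) := isCompact_Icc.prod KK_compact
    have hCne : (Set.Icc a t₁ ×ˢ KK).Nonempty :=
      ⟨(a, 0), Set.mk_mem_prod ⟨le_refl a, ht₁.1⟩ KK_zero_mem⟩
    obtain ⟨⟨t₀, x₀⟩, hmem, hmaxK⟩ := hC.exists_isMaxOn hCne hvcont.continuousOn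
    have hmemt : t₀ ∈ Set.Icc a t₁ := hmem.1
    have hmemx : x₀ ∈ KK := hmem.2
    have hmax' : ∀ s ∈ Set.Icc a t₁, ∀ x : E3, v (s, x) ≤ v (t₀, x₀) := by
      intro s hs x
      obtain ⟨y, hyK, hyeq⟩ := per_reduce (g := fun x : E3 => Real.sqrt (ε + ∑ i, (u s x i)^2))
        (fun x j => hGuper ε s x j) x
      have hxy : v (s, x) = v (s, y) := by
        simp only [hvdef]
        rw [hyeq]
      rw [hxy]
      exact hmaxK (Set.mk_mem_prod hs hyK)
    have hv1 : Wa < v (t₁, x₁) := by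
      simp only [hvdef]
      have : I t₁ = ∫ s in a..t₁, (F s + ε) := rfl
      linarith [hcon]
    have hvt0 : Wa < v (t₀, x₀) :=
      lt_of_lt_of_le hv1 (hmax' t₁ ⟨ht₁.1, le_refl t₁⟩ x₁)
    have hat₀ : a < t₀ := by
      rcases lt_or_eq_of_le hmemt.1 with h | h
      · exact h
      · exfalso
        have : v (t₀, x₀) = Real.sqrt (ε + ∑ i, (u a x₀ i)^2) := by
          simp only [hvdef, ← h, hIa]
          ring
        rw [this] at hvt0
        exact absurd (hWa_le x₀) (not_le.mpr hvt0)
    have ht₀b : t₀ ∈ Set.Icc a b := ⟨hmemt.1, hmemt.2.trans ht₁.2⟩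
    -- time derivative at (t₀, x₀)
    set w : ℝ := Real.sqrt (ε + ∑ i, (u t₀ x₀ i)^2) with hwdef
    have hwpos : 0 < w := Real.sqrt_pos.mpr (hsqpos t₀ x₀)
    set d : Fin 3 → ℝ := fun i => deriv (fun s => u s x₀ i) t₀ with hddef
    have hder_i : ∀ i, HasDerivAt (fun s => u s x₀ i) (d i) t₀ := fun i =>
      (((hux x₀ i).differentiable (by simp)) t₀).hasDerivAt
    have hsum : HasDerivAt (fun t => ε + ∑ i, (u t x₀ i)^2) (∑ i, 2 * u t₀ x₀ i * d i) t₀ := by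
      have h1 : HasDerivAt (fun t => ∑ i, (u t x₀ i)^2) (∑ i, 2 * u t₀ x₀ i * d i) t₀ := by
        have h2 := HasDerivAt.fun_sum (fun i (_ : i ∈ Finset.univ) => (hder_i i).pow 2)
        refine h2.congr_deriv ?_
        apply Finset.sum_congr rfl
        intro i _
        simp [pow_one]
      exact h1.const_add ε
    have hg : HasDerivAt (fun t => v (t, x₀))
        ((∑ i, 2 * u t₀ x₀ i * d i) / (2 * w) - (F t₀ + ε)) t₀ :=
      (hsum.sqrt (ne_of_gt (hsqpos t₀ x₀))).sub (hIder t₀)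
    have hDpos : 0 ≤ (∑ i, 2 * u t₀ x₀ i * d i) / (2 * w) - (F t₀ + ε) :=
      leftmax hat₀ hmemt.2 (fun s hs => hmax' s hs x₀) hg
    -- spatial maximum principle at x₀
    have hPmax : ∀ x : E3, (∑ i, (u t₀ x i)^2) ≤ ∑ i, (u t₀ x₀ i)^2 := by
      intro x
      have h1 := hmax' t₀ hmemt x
      by_contra hno
      push_neg at hno
      have h2 : Real.sqrt (ε + ∑ i, (u t₀ x₀ i)^2) < Real.sqrt (ε + ∑ i, (u t₀ x i)^2) :=
        Real.sqrt_lt_sqrt (le_of_lt (hsqpos t₀ x₀)) (by linarith)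
      simp only [hvdef] at h1
      linarith
    have hPcd : ContDiff ℝ ((⊤:ℕ∞):WithTop ℕ∞) (fun x : E3 => ∑ i, (u t₀ x i)^2) :=
      ContDiff.sum fun i _ => (hut t₀ i).pow 2
    have hlapP : lap3 (fun x : E3 => ∑ i, (u t₀ x i)^2) x₀ ≤ 0 := by
      show (∑ j, pd j (pd j (fun x : E3 => ∑ i, (u t₀ x i)^2)) x₀) ≤ 0
      apply Finset.sum_nonpos
      intro j _
      exact pd_pd_nonpos hPcd hPmax j
    have hlap_eq := lap_sum_sq (fun i => hut t₀ i) x₀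
    have hpos2 : (0:ℝ) ≤ ∑ j, ∑ i, (pd j (fun y => u t₀ y i) x₀)^2 :=
      Finset.sum_nonneg fun j _ => Finset.sum_nonneg fun i _ => sq_nonneg _
    have hkey : ∑ i, u t₀ x₀ i * lap3 (fun y => u t₀ y i) x₀ ≤ 0 := by
      rw [hlap_eq] at hlapP
      linarith
    -- PDE at the point
    have hpde' : ∀ i, d i = ν * lap3 (fun y => u t₀ y i) x₀ + f t₀ x₀ i
        - (crossProduct (curl3 (u t₀) x₀)) (u t₀ x₀) i := by
      intro i
      have := hpde t₀ ht₀b x₀ i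
      simp only [hddef]
      linarith
    have hcross : ∑ i, u t₀ x₀ i * (crossProduct (curl3 (u t₀) x₀)) (u t₀ x₀) i = 0 := by
      have h1 := cross_orth (curl3 (u t₀) x₀) (u t₀ x₀)
      rw [← h1]
      apply Finset.sum_congr rfl
      intro i _
      ring
    have hCS : ∑ i, u t₀ x₀ i * f t₀ x₀ i ≤ w * F t₀ := by
      have h1 : (∑ i, u t₀ x₀ i * f t₀ x₀ i)^2
          ≤ (∑ i, (u t₀ x₀ i)^2) * ∑ i, (f t₀ x₀ i)^2 :=
        Finset.sum_mul_sq_le_sq_mul_sq _ _ _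
      have h2 : ∑ i, u t₀ x₀ i * f t₀ x₀ i
          ≤ Real.sqrt ((∑ i, (u t₀ x₀ i)^2) * ∑ i, (f t₀ x₀ i)^2) := by
        calc ∑ i, u t₀ x₀ i * f t₀ x₀ i ≤ |∑ i, u t₀ x₀ i * f t₀ x₀ i| := le_abs_self _
          _ = Real.sqrt ((∑ i, u t₀ x₀ i * f t₀ x₀ i)^2) := (Real.sqrt_sq_eq_abs _).symm
          _ ≤ _ := Real.sqrt_le_sqrt h1
      have h3 : Real.sqrt ((∑ i, (u t₀ x₀ i)^2) * ∑ i, (f t₀ x₀ i)^2)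
          = Real.sqrt (∑ i, (u t₀ x₀ i)^2) * Real.sqrt (∑ i, (f t₀ x₀ i)^2) :=
        Real.sqrt_mul (Finset.sum_nonneg fun i _ => sq_nonneg _) _
      have h4 : Real.sqrt (∑ i, (u t₀ x₀ i)^2) ≤ w :=
        Real.sqrt_le_sqrt (by linarith)
      have h5 : Real.sqrt (∑ i, (f t₀ x₀ i)^2) ≤ F t₀ := hFle t₀ x₀
      calc ∑ i, u t₀ x₀ i * f t₀ x₀ i
          ≤ Real.sqrt (∑ i, (u t₀ x₀ i)^2) * Real.sqrt (∑ i, (f t₀ x₀ i)^2) := by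
            rw [← h3]; exact h2
        _ ≤ w * F t₀ := by
            apply mul_le_mul h4 h5 (Real.sqrt_nonneg _) hwpos.le
    -- combine
    have hfinal : (∑ i, 2 * u t₀ x₀ i * d i) ≤ 2 * w * F t₀ := by
      have e1 : ∑ i, 2 * u t₀ x₀ i * d i =
          2 * ν * (∑ i, u t₀ x₀ i * lap3 (fun y => u t₀ y i) x₀)
          + 2 * (∑ i, u t₀ x₀ i * f t₀ x₀ i)
          - 2 * (∑ i, u t₀ x₀ i * (crossProduct (curl3 (u t₀) x₀)) (u t₀ x₀) i) := by
        rw [Finset.mul_sum, Finset.mul_sum, Finset.mul_sum, ← Finset.sum_add_distrib,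
          ← Finset.sum_sub_distrib]
        apply Finset.sum_congr rfl
        intro i _
        rw [hpde' i]
        ring
      rw [e1, hcross]
      have e2 : 2 * ν * (∑ i, u t₀ x₀ i * lap3 (fun y => u t₀ y i) x₀) ≤ 0 :=
        mul_nonpos_of_nonneg_of_nonpos (by linarith) hkey
      linarith
    have hdiv : (∑ i, 2 * u t₀ x₀ i * d i) / (2 * w) ≤ F t₀ := by
      rw [div_le_iff₀ (by positivity)]
      calc (∑ i, 2 * u t₀ x₀ i * d i) ≤ 2 * w * F t₀ := hfinal
        _ = F t₀ * (2 * w) := by ring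
    linarith
  -- conclusion
  intro t htab
  set M0 : ℝ := ⨆ x : E3, Real.sqrt (∑ i, (u a x i)^2) with hM0def
  have hFint2 : ∀ c d : ℝ, IntervalIntegrable F volume c d := fun c d =>
    hFcont.intervalIntegrable c d
  have hbd : ∀ x : E3, ∀ ε > (0:ℝ), Real.sqrt (∑ i, (u t x i)^2)
      ≤ M0 + (∫ s in a..b, F s) + (Real.sqrt ε + ε * (b - a)) := by
    intro x ε hε
    have h1 := claim ε hε t htab x
    have h0 : Real.sqrt (∑ i, (u t x i)^2) ≤ Real.sqrt (ε + ∑ i, (u t x i)^2) :=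
      Real.sqrt_le_sqrt (by linarith)
    have hWaM : (⨆ y : E3, Real.sqrt (ε + ∑ i, (u a y i)^2)) ≤ M0 + Real.sqrt ε := by
      apply ciSup_le
      intro y
      have h2 := sqrt_sum_le ε (∑ i, (u a y i)^2) (Finset.sum_nonneg fun i _ => sq_nonneg _)
      have hM0 : Real.sqrt (∑ i, (u a y i)^2) ≤ M0 :=
        le_ciSup (bdd_range (hGu0 a) (hGuper0 a)) y
      linarith
    have hIb : (∫ s in a..t, (F s + ε)) ≤ (∫ s in a..b, F s) + ε * (b - a) := by
      have e1 : (∫ s in a..t, (F s + ε)) = (∫ s in a..t, F s) + ε * (t - a) := by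
        rw [intervalIntegral.integral_add (hFint2 a t) intervalIntegrable_const,
          intervalIntegral.integral_const]
        simp [smul_eq_mul]
        ring
      have e2 : (∫ s in a..t, F s) ≤ ∫ s in a..b, F s := by
        rw [← intervalIntegral.integral_add_adjacent_intervals (hFint2 a t) (hFint2 t b)]
        have : 0 ≤ ∫ s in t..b, F s :=
          intervalIntegral.integral_nonneg htab.2 (fun s _ => hFnonneg s)
        linarith
      have e3 : ε * (t - a) ≤ ε * (b - a) := by nlinarith [htab.2]
      linarith
    linarith
  apply ciSup_le
  intro x
  have htend : Filter.Tendsto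
      (fun ε : ℝ => M0 + (∫ s in a..b, F s) + (Real.sqrt ε + ε * (b - a)))
      (nhdsWithin 0 (Set.Ioi 0)) (nhds (M0 + (∫ s in a..b, F s))) := by
    have h1 : Filter.Tendsto (fun ε : ℝ => Real.sqrt ε + ε * (b - a)) (nhds 0) (nhds 0) := by
      have hc : Continuous (fun ε : ℝ => Real.sqrt ε + ε * (b - a)) :=
        Real.continuous_sqrt.add (continuous_id.mul continuous_const)
      have := hc.tendsto 0
      simpa using this
    have h2 := tendsto_const_nhds (x := M0 + (∫ s in a..b, F s))
        (f := nhdsWithin (0:ℝ) (Set.Ioi 0)) |>.add (h1.mono_left nhdsWithin_le_nhds)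
    simpa using h2
  refine ge_of_tendsto htend ?_
  filter_upwards [self_mem_nhdsWithin] with ε hε
  exact hbd x ε hε
end

section
/- Let u be a smooth solution of the damped equation ∂ₜu + (∇×u)×u + γu = νΔu + f on 𝕋³ × [a,b] with ν > 0 and γ ≥ 0. Then for all t ∈ [a,b], ‖u(t)‖_{L^∞} ≤ e^{−γ(t−a)}‖u(a)‖_{L^∞} + ∫ₐᵗ e^{−γ(t−s)}‖f(s)‖_{L^∞} ds. -/
open MeasureTheory

namespace MPaux

open Real Set

abbrev V : Type := Fin 3 → ℝ

noncomputable def nrm (v : V) : ℝ := Real.sqrt (∑ i, v i ^ 2)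

lemma nrm_nonneg (v : V) : 0 ≤ nrm v := Real.sqrt_nonneg _

lemma sq_nrm (v : V) : nrm v ^ 2 = ∑ i, v i ^ 2 :=
  Real.sq_sqrt (Finset.sum_nonneg fun i _ => sq_nonneg _)

lemma nrm_continuous : Continuous nrm := by
  unfold nrm
  exact (continuous_finset_sum _ fun i _ => ((continuous_apply i).pow 2)).sqrt

lemma nrm_eq_norm (v : V) : nrm v = ‖(EuclideanSpace.equiv (Fin 3) ℝ).symm v‖ := by
  rw [EuclideanSpace.norm_eq]
  simp [Real.norm_eq_abs, sq_abs]
  rfl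

lemma cauchy_schwarz (v w : V) : ∑ i, v i * w i ≤ nrm v * nrm w := by
  have h := Finset.sum_mul_sq_le_sq_mul_sq Finset.univ v w
  calc ∑ i, v i * w i ≤ |∑ i, v i * w i| := le_abs_self _
    _ = Real.sqrt ((∑ i, v i * w i) ^ 2) := (Real.sqrt_sq_eq_abs _).symm
    _ ≤ Real.sqrt ((∑ i, v i ^ 2) * ∑ i, w i ^ 2) := Real.sqrt_le_sqrt h
    _ = nrm v * nrm w := by
        rw [Real.sqrt_mul (Finset.sum_nonneg fun i _ => sq_nonneg _)]; rfl

def K : Set V := Set.Icc 0 (fun _ => 2 * π)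

lemma K_compact : IsCompact K := isCompact_Icc

lemma K_nonempty : K.Nonempty :=
  ⟨0, le_refl _, fun i => by positivity⟩

lemma shift_eq {g : V → ℝ} (hg : ∀ x (j : Fin 3), g (x + (Pi.single j (2 * π) : V)) = g x)
    (k : ℤ) (j : Fin 3) : ∀ x : V, g (x + (k : ℝ) • (Pi.single j (2 * π) : V)) = g x := by
  induction k using Int.induction_on with
  | zero => intro x; simp
  | succ n ih =>
      intro x
      push_cast at ih ⊢
      have h1 : x + ((n : ℝ) + 1) • (Pi.single j (2 * π) : V)
          = (x + (Pi.single j (2 * π) : V)) + (n : ℝ) • (Pi.single j (2 * π) : V) := by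
        module
      rw [h1, ih, hg]
  | pred n ih =>
      intro x
      push_cast at ih ⊢
      have h1 : (x + (-(n : ℝ) - 1) • (Pi.single j (2 * π) : V)) + (Pi.single j (2 * π) : V)
          = x + (-(n : ℝ)) • (Pi.single j (2 * π) : V) := by
        module
      rw [← hg (x + (-(n : ℝ) - 1) • (Pi.single j (2 * π) : V)) j, h1, ih]

lemma coord_bound (r : ℝ) :
    0 ≤ r + (-⌊r / (2 * π)⌋ : ℝ) * (2 * π) ∧ r + (-⌊r / (2 * π)⌋ : ℝ) * (2 * π) ≤ 2 * π := by
  have h2π : (0:ℝ) < 2 * π := by positivity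
  have h1 : r + (-⌊r / (2 * π)⌋ : ℝ) * (2 * π) = 2 * π * Int.fract (r / (2 * π)) := by
    rw [Int.fract]
    field_simp
    ring
  rw [h1]
  have h2 := Int.fract_nonneg (r / (2 * π))
  have h3 := (Int.fract_lt_one (r / (2 * π))).le
  constructor
  · positivity
  · nlinarith

lemma exists_rep {g : V → ℝ}
    (hg : ∀ x (j : Fin 3), g (x + (Pi.single j (2 * π) : V)) = g x) (x : V) :
    ∃ y ∈ K, g y = g x := by
  set c : Fin 3 → ℤ := fun j => -⌊x j / (2 * π)⌋ with hc
  set y : V := x + ((c 0 : ℝ)) • (Pi.single 0 (2 * π) : V)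
      + ((c 1 : ℝ)) • (Pi.single 1 (2 * π) : V)
      + ((c 2 : ℝ)) • (Pi.single 2 (2 * π) : V) with hyd
  have hy : ∀ i, y i = x i + (c i : ℝ) * (2 * π) := by
    intro i
    fin_cases i <;>
      simp [hyd, Pi.single_apply]
  refine ⟨y, ?_, ?_⟩
  · constructor <;> intro i <;>
      · have := coord_bound (x i)
        simp only [Pi.zero_apply, hy i, hc]
        push_cast
        first
          | linarith [this.1]
          | linarith [this.2]
  · rw [hyd, shift_eq hg (c 2) 2, shift_eq hg (c 1) 1, shift_eq hg (c 0) 0]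


noncomputable def supn (w : ℝ → V → V) (t : ℝ) : ℝ := ⨆ x : V, nrm (w t x)

instance : CompactSpace K := isCompact_iff_compactSpace.mp K_compact
instance : Nonempty K := K_nonempty.to_subtype

section family

variable {w : ℝ → V → V} (hwc : Continuous fun p : ℝ × V => w p.1 p.2)
    (hper : ∀ t x (j : Fin 3), w t (x + Pi.single j (2 * π)) = w t x)

include hwc in
lemma cont_slice (t : ℝ) : Continuous fun x : V => nrm (w t x) :=
  nrm_continuous.comp (hwc.comp (continuous_const.prodMk continuous_id))

include hper in
lemma range_eq (t : ℝ) :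
    Set.range (fun x : V => nrm (w t x)) = (fun x : V => nrm (w t x)) '' K := by
  apply Set.Subset.antisymm
  · rintro r ⟨x, rfl⟩
    obtain ⟨y, hyK, hy⟩ := exists_rep (g := fun x => nrm (w t x))
      (fun x j => by simp only [hper t x j]) x
    exact ⟨y, hyK, hy⟩
  · rintro r ⟨x, _, rfl⟩
    exact ⟨x, rfl⟩

include hwc hper in
lemma bdd (t : ℝ) : BddAbove (Set.range fun x : V => nrm (w t x)) := by
  rw [range_eq hper t]
  exact (K_compact.image (cont_slice hwc t)).bddAbove

include hwc hper in
lemma le_supn (t : ℝ) (x : V) : nrm (w t x) ≤ supn w t :=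
  le_ciSup (bdd hwc hper t) x

include hwc hper in
lemma supn_nonneg (t : ℝ) : 0 ≤ supn w t :=
  le_trans (nrm_nonneg _) (le_supn hwc hper t 0)

include hwc hper in
lemma exists_max (t : ℝ) : ∃ x₀ : V,
    (∀ x, nrm (w t x) ≤ nrm (w t x₀)) ∧ supn w t = nrm (w t x₀) := by
  obtain ⟨x₀, _, hmax⟩ := K_compact.exists_isMaxOn K_nonempty (cont_slice hwc t).continuousOn
  have hall : ∀ x, nrm (w t x) ≤ nrm (w t x₀) := by
    intro x
    obtain ⟨y, hyK, hy⟩ := exists_rep (g := fun x => nrm (w t x))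
      (fun x j => by simp only [hper t x j]) x
    calc nrm (w t x) = nrm (w t y) := hy.symm
      _ ≤ nrm (w t x₀) := hmax hyK
  refine ⟨x₀, hall, le_antisymm (ciSup_le hall) (le_supn hwc hper t x₀)⟩

include hwc hper in
lemma supn_continuous : Continuous (supn w) := by
  classical
  set E := EuclideanSpace ℝ (Fin 3)
  set cm : C(ℝ × K, E) :=
    ⟨fun p => (EuclideanSpace.equiv (Fin 3) ℝ).symm (w p.1 p.2),
      ((EuclideanSpace.equiv (Fin 3) ℝ).symm.continuous).comp
        (hwc.comp (continuous_fst.prodMk (continuous_subtype_val.comp continuous_snd)))⟩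
    with hcm
  have key : ∀ t, supn w t = ‖ContinuousMap.curry cm t‖ := by
    intro t
    rw [ContinuousMap.norm_eq_iSup_norm]
    have h1 : ∀ x : K, ‖(ContinuousMap.curry cm t) x‖ = nrm (w t ↑x) := by
      intro x
      rw [nrm_eq_norm]
      rfl
    rw [iSup_congr h1]
    calc supn w t = sSup (Set.range fun x : V => nrm (w t x)) := rfl
      _ = sSup ((fun x : V => nrm (w t x)) '' K) := by rw [range_eq hper t]
      _ = ⨆ x : K, nrm (w t ↑x) := sSup_image'
  exact ((cm.curry.continuous).norm).congr fun t => (key t).symm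

end family

section calc3

lemma pd_contDiff {g : V → ℝ} (hg : ContDiff ℝ (⊤ : ℕ∞) g) (j : Fin 3) :
    ContDiff ℝ (⊤ : ℕ∞) (pd j g) := by
  have h1 : pd j g = fun x =>
      (ContinuousLinearMap.apply ℝ ℝ (Pi.single j 1 : V)) (fderiv ℝ g x) := rfl
  rw [h1]
  exact (ContinuousLinearMap.apply ℝ ℝ (Pi.single j 1 : V)).contDiff.comp
    (hg.fderiv_right (by simp))

lemma pd_mul {g h : V → ℝ} {x : V} (hg : DifferentiableAt ℝ g x)
    (hh : DifferentiableAt ℝ h x) (j : Fin 3) :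
    pd j (fun y => g y * h y) x = g x * pd j h x + h x * pd j g x := by
  unfold pd
  rw [fderiv_fun_mul hg hh]
  simp

lemma pd_const_mul {g : V → ℝ} {x : V} (hg : DifferentiableAt ℝ g x) (c : ℝ) (j : Fin 3) :
    pd j (fun y => c * g y) x = c * pd j g x := by
  unfold pd
  rw [fderiv_const_mul hg]
  simp

lemma pd_sum {g : Fin 3 → V → ℝ} {x : V} (hg : ∀ i, DifferentiableAt ℝ (g i) x) (j : Fin 3) :
    pd j (fun y => ∑ i, g i y) x = ∑ i, pd j (g i) x := by
  unfold pd
  rw [fderiv_fun_sum fun i _ => hg i]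
  simp

lemma hasDerivAt_line {g : V → ℝ} (hg : ContDiff ℝ (⊤ : ℕ∞) g) (x e : V) (s : ℝ) :
    HasDerivAt (fun s => g (x + s • e)) (fderiv ℝ g (x + s • e) e) s := by
  have hl : HasDerivAt (fun s : ℝ => x + s • e) e s := by
    simpa using ((hasDerivAt_id s).smul_const e).const_add x
  have := ((hg.differentiable (by simp)) (x + s • e)).hasFDerivAt.comp_hasDerivAt s hl
  exact this

lemma second_deriv_test {φ φ' φ'' : ℝ → ℝ}
    (h1 : ∀ s, HasDerivAt φ (φ' s) s) (h2 : ∀ s, HasDerivAt φ' (φ'' s) s)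
    (hc : Continuous φ'') (hmax : ∀ s, φ s ≤ φ 0) : φ'' 0 ≤ 0 := by
  by_contra hpos
  push_neg at hpos
  have h0 : φ' 0 = 0 :=
    IsLocalMax.hasDerivAt_eq_zero (Filter.Eventually.of_forall hmax) (h1 0)
  obtain ⟨δ, hδpos, hδ⟩ : ∃ δ > 0, ∀ s ∈ Set.Icc (0:ℝ) δ, 0 < φ'' s := by
    have hopen : IsOpen {s : ℝ | 0 < φ'' s} := isOpen_lt continuous_const hc
    obtain ⟨ε, hε, hball⟩ := Metric.isOpen_iff.mp hopen 0 hpos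
    refine ⟨ε/2, by linarith, fun s hs => hball ?_⟩
    rw [Metric.mem_ball, Real.dist_eq, sub_zero, abs_of_nonneg hs.1]
    linarith [hs.2]
  have hmono' : StrictMonoOn φ' (Set.Icc 0 δ) := by
    apply strictMonoOn_of_deriv_pos (convex_Icc 0 δ)
    · exact fun s _ => (h2 s).continuousAt.continuousWithinAt
    · intro s hs
      rw [interior_Icc] at hs
      rw [(h2 s).deriv]
      exact hδ s ⟨hs.1.le, hs.2.le⟩
  have hφ'pos : ∀ s ∈ Set.Ioo (0:ℝ) δ, 0 < φ' s := by
    intro s hs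
    have := hmono' (Set.left_mem_Icc.mpr hδpos.le) ⟨hs.1.le, hs.2.le⟩ hs.1
    rwa [h0] at this
  have hmono : StrictMonoOn φ (Set.Icc 0 δ) := by
    apply strictMonoOn_of_deriv_pos (convex_Icc 0 δ)
    · exact fun s _ => (h1 s).continuousAt.continuousWithinAt
    · intro s hs
      rw [interior_Icc] at hs
      rw [(h1 s).deriv]
      exact hφ'pos s hs
  have := hmono (Set.left_mem_Icc.mpr hδpos.le) (Set.right_mem_Icc.mpr hδpos.le) hδpos
  exact absurd (hmax δ) (not_le.mpr this)

lemma sum_lap_nonpos {v : Fin 3 → V → ℝ} (hv : ∀ i, ContDiff ℝ (⊤ : ℕ∞) (v i)) {x₀ : V}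
    (hmax : ∀ y, ∑ i, v i y ^ 2 ≤ ∑ i, v i x₀ ^ 2) :
    ∑ i, v i x₀ * lap3 (v i) x₀ ≤ 0 := by
  set h : V → ℝ := fun y => ∑ i, v i y ^ 2 with hh
  have ch : ContDiff ℝ (⊤ : ℕ∞) h := ContDiff.sum fun i _ => (hv i).pow 2
  have hdiff : ∀ (i : Fin 3) (y : V), DifferentiableAt ℝ (v i) y :=
    fun i y => (hv i).differentiable (by simp) y
  have hpddiff : ∀ (i : Fin 3) (j : Fin 3) (y : V), DifferentiableAt ℝ (pd j (v i)) y :=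
    fun i j y => (pd_contDiff (hv i) j).differentiable (by simp) y
  -- first derivative identity
  have hder : ∀ (j : Fin 3), pd j h = fun y => ∑ i, 2 * v i y * pd j (v i) y := by
    intro j
    funext y
    have he : h = fun z => ∑ i, v i z * v i z := by
      funext z
      exact Finset.sum_congr rfl fun i _ => sq (v i z)
    rw [he, pd_sum (g := fun i z => v i z * v i z) (fun i => (hdiff i y).mul (hdiff i y)) j]
    refine Finset.sum_congr rfl fun i _ => ?_
    rw [pd_mul (hdiff i y) (hdiff i y) j]
    ring
  -- second derivative identity
  have hkey : ∀ (j : Fin 3), pd j (pd j h) x₀ =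
      ∑ i, (2 * v i x₀ * pd j (pd j (v i)) x₀ + 2 * pd j (v i) x₀ ^ 2) := by
    intro j
    rw [hder j]
    rw [pd_sum (g := fun i y => 2 * v i y * pd j (v i) y) (fun i => (((hdiff i x₀).const_mul 2).mul (hpddiff i j x₀))) j]
    refine Finset.sum_congr rfl fun i _ => ?_
    rw [show (fun y => 2 * v i y * pd j (v i) y) = (fun y => (2 * v i y) * pd j (v i) y)
      from rfl]
    rw [pd_mul ((hdiff i x₀).const_mul 2) (hpddiff i j x₀) j,
      pd_const_mul (hdiff i x₀) 2 j]
    ring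
  -- nonpositivity of each pure second derivative at max
  have hjle : ∀ (j : Fin 3), pd j (pd j h) x₀ ≤ 0 := by
    intro j
    set e : V := Pi.single j 1 with hee
    have hline : Continuous fun s : ℝ => x₀ + s • e := by continuity
    have h2t := second_deriv_test
      (φ := fun s => h (x₀ + s • e))
      (φ' := fun s => pd j h (x₀ + s • e))
      (φ'' := fun s => pd j (pd j h) (x₀ + s • e))
      (fun s => hasDerivAt_line ch x₀ e s)
      (fun s => hasDerivAt_line (pd_contDiff ch j) x₀ e s)
      (((pd_contDiff (pd_contDiff ch j) j).continuous).comp hline)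
      (fun s => by simpa using hmax (x₀ + s • e))
    simpa using h2t
  have hsum : ∑ j, pd j (pd j h) x₀ ≤ 0 := Finset.sum_nonpos fun j _ => hjle j
  rw [Finset.sum_congr rfl fun j _ => hkey j] at hsum
  rw [Finset.sum_comm] at hsum
  have hexp : ∑ i, ∑ j, (2 * v i x₀ * pd j (pd j (v i)) x₀ + 2 * pd j (v i) x₀ ^ 2)
      = 2 * (∑ i, v i x₀ * lap3 (v i) x₀) + 2 * ∑ i, ∑ j, pd j (v i) x₀ ^ 2 := by
    unfold lap3
    rw [Finset.mul_sum, Finset.mul_sum, ← Finset.sum_add_distrib]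
    refine Finset.sum_congr rfl fun i _ => ?_
    rw [Finset.sum_add_distrib, Finset.mul_sum, Finset.mul_sum, Finset.mul_sum]
    congr 1
    exact Finset.sum_congr rfl fun j _ => by ring
  rw [hexp] at hsum
  have hsq : 0 ≤ ∑ i, ∑ j, pd j (v i) x₀ ^ 2 :=
    Finset.sum_nonneg fun i _ => Finset.sum_nonneg fun j _ => sq_nonneg _
  linarith

end calc3

open Filter Topology in
lemma deriv_nonneg_of_left_le {g : ℝ → ℝ} {d t₀ a : ℝ} (h : HasDerivAt g d t₀) (ha : a < t₀)
    (hle : ∀ t, a ≤ t → t < t₀ → g t ≤ g t₀) : 0 ≤ d := by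
  have hw : HasDerivWithinAt g d (Set.Iio t₀) t₀ := h.hasDerivWithinAt
  have hslope := (hasDerivWithinAt_iff_tendsto_slope' (by simp)).mp hw
  refine ge_of_tendsto hslope ?_
  have hmem : Set.Ioo a t₀ ∈ 𝓝[Set.Iio t₀] t₀ :=
    Ioo_mem_nhdsLT_of_mem ⟨ha, le_refl t₀⟩
  filter_upwards [hmem] with t ht
  rw [slope_def_field]
  exact div_nonneg_of_nonpos (sub_nonpos.mpr (hle t ht.1.le ht.2)) (sub_nonpos.mpr ht.2.le)

open Filter Topology intervalIntegral in
theorem key_bound (ν γ a b : ℝ) (hν : 0 < ν) (hγ : 0 ≤ γ) (hab : a < b)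
    (u f : ℝ → V → V)
    (hu : ContDiff ℝ (⊤ : ℕ∞) fun p : ℝ × V => u p.1 p.2)
    (hf : Continuous fun p : ℝ × V => f p.1 p.2)
    (hperu : ∀ t x (j : Fin 3), u t (x + Pi.single j (2 * π)) = u t x)
    (hperf : ∀ t x (j : Fin 3), f t (x + Pi.single j (2 * π)) = f t x)
    (hpde : ∀ t ∈ Set.Icc a b, ∀ x i,
      deriv (fun s => u s x i) t + crossProduct (curl3 (u t) x) (u t x) i + γ * u t x i =
        ν * lap3 (fun y => u t y i) x + f t x i)
    (ε : ℝ) (hε : 0 < ε) :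
    ∀ t ∈ Set.Icc a b, supn u t ≤
      Real.exp (-γ * (t - a)) * (supn u a + ε)
        + ∫ s in a..t, Real.exp (-γ * (t - s)) * (supn f s + ε) := by
  have hwcu : Continuous fun p : ℝ × V => u p.1 p.2 := hu.continuous
  set M : ℝ → ℝ := supn u with hM
  set F : ℝ → ℝ := supn f with hF
  have hMc : Continuous M := supn_continuous hwcu hperu
  have hFc : Continuous F := supn_continuous hf hperf
  have hM0 : ∀ t, 0 ≤ M t := supn_nonneg hwcu hperu
  have hF0 : ∀ t, 0 ≤ F t := supn_nonneg hf hperf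
  set G : ℝ → ℝ := fun s => F s + ε with hG
  have hGc : Continuous G := hFc.add continuous_const
  set Φ : ℝ → ℝ := fun t =>
    Real.exp (γ * a) * (M a + ε) + ∫ s in a..t, Real.exp (γ * s) * G s with hΦ
  set ψ : ℝ → ℝ := fun t => Real.exp (-γ * t) * Φ t with hψ
  have hψ_eq : ∀ t, ψ t = Real.exp (-γ * (t - a)) * (M a + ε)
      + ∫ s in a..t, Real.exp (-γ * (t - s)) * G s := by
    intro t
    rw [hψ]
    simp only
    rw [hΦ]
    simp only
    rw [mul_add, ← intervalIntegral.integral_const_mul]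
    congr 1
    · rw [← mul_assoc, ← Real.exp_add]
      congr 2
      ring
    · refine intervalIntegral.integral_congr fun s _ => ?_
      rw [← mul_assoc, ← Real.exp_add]
      congr 2
      ring
  have hG_int : ∀ c d : ℝ, IntervalIntegrable (fun s => Real.exp (γ * s) * G s) volume c d :=
    fun c d => ((Real.continuous_exp.comp (continuous_const.mul continuous_id)).mul
      hGc).intervalIntegrable c d
  have hΦd : ∀ t, HasDerivAt Φ (Real.exp (γ * t) * G t) t := by
    intro t
    have hgc : Continuous fun s => Real.exp (γ * s) * G s :=
      (Real.continuous_exp.comp (continuous_const.mul continuous_id)).mul hGc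
    exact (intervalIntegral.integral_hasDerivAt_right (hG_int a t)
      (hgc.stronglyMeasurableAtFilter _ _) hgc.continuousAt).const_add _
  have hψd : ∀ t, HasDerivAt ψ (-γ * ψ t + G t) t := by
    intro t
    have h0 : HasDerivAt (fun s : ℝ => -γ * s) (-γ) t := by
      simpa only [mul_one, id] using (hasDerivAt_id t).const_mul (-γ)
    have h1 : HasDerivAt (fun t : ℝ => Real.exp (-γ * t)) (Real.exp (-γ * t) * -γ) t :=
      (Real.hasDerivAt_exp (-γ * t)).comp t h0
    have h2 := h1.mul (hΦd t)
    have h3 : Real.exp (-γ * t) * -γ * Φ t + Real.exp (-γ * t) * (Real.exp (γ * t) * G t)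
        = -γ * ψ t + G t := by
      have he : Real.exp (-γ * t) * Real.exp (γ * t) = 1 := by
        rw [← Real.exp_add]
        simp
      rw [hψ]
      simp only
      calc Real.exp (-γ * t) * -γ * Φ t + Real.exp (-γ * t) * (Real.exp (γ * t) * G t)
          = -γ * (Real.exp (-γ * t) * Φ t)
            + Real.exp (-γ * t) * Real.exp (γ * t) * G t := by ring
        _ = -γ * (Real.exp (-γ * t) * Φ t) + G t := by rw [he, one_mul]
    rw [h3] at h2
    exact h2
  have hψc : Continuous ψ := continuous_iff_continuousAt.mpr fun t => (hψd t).continuousAt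
  have hψa : ψ a = M a + ε := by
    rw [hψ_eq a]
    simp
  have hψpos : ∀ t, a ≤ t → 0 < ψ t := by
    intro t hat
    rw [hψ_eq t]
    have h2 : 0 ≤ ∫ s in a..t, Real.exp (-γ * (t - s)) * G s :=
      intervalIntegral.integral_nonneg hat fun s _ =>
        mul_nonneg (Real.exp_pos _).le
          (by rw [hG]; simp only; linarith [hF0 s])
    have h3 : 0 < Real.exp (-γ * (t - a)) * (M a + ε) :=
      mul_pos (Real.exp_pos _) (by linarith [hM0 a])
    linarith
  -- main claim
  suffices hS : ∀ t ∈ Set.Icc a b, M t ≤ ψ t by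
    intro t ht
    rw [← hψ_eq t]
    exact hS t ht
  by_contra hcon
  push_neg at hcon
  obtain ⟨tb, htbI, htbB⟩ := hcon
  set B : Set ℝ := {t | t ∈ Set.Icc a b ∧ ψ t < M t} with hB
  have hBne : B.Nonempty := ⟨tb, htbI, htbB⟩
  have hBbd : BddBelow B := ⟨a, fun s hs => hs.1.1⟩
  set t₀ : ℝ := sInf B with ht₀
  have ht₀le : t₀ ≤ b := le_trans (csInf_le hBbd ⟨htbI, htbB⟩) htbI.2
  have ht₀ge : a ≤ t₀ := le_csInf hBne fun s hs => hs.1.1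
  set D : ℝ → ℝ := fun t => M t - ψ t with hD
  have hDc : Continuous D := hMc.sub hψc
  have hDa : D a = -ε := by
    rw [hD]
    simp only
    rw [hψa]
    ring
  have hnear : ∀ c : ℝ, D c < 0 → ∃ δ > 0, ∀ s, |s - c| < δ → D s < 0 := by
    intro c hc
    have hopen : IsOpen {s : ℝ | D s < 0} := isOpen_lt hDc continuous_const
    obtain ⟨δ, hδ, hball⟩ := Metric.isOpen_iff.mp hopen c hc
    exact ⟨δ, hδ, fun s hs => hball (by rwa [Metric.mem_ball, Real.dist_eq])⟩
  obtain ⟨δa, hδa, hδaP⟩ := hnear a (by rw [hDa]; linarith)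
  have ha_lt : a < t₀ := by
    have hδle : ∀ s ∈ B, a + δa ≤ s := by
      intro s hs
      by_contra hlt
      push_neg at hlt
      have h1 : |s - a| < δa := by
        rw [abs_lt]
        constructor <;> [linarith [hs.1.1] ; linarith]
      have := hδaP s h1
      rw [hD] at this
      simp only at this
      exact absurd hs.2 (by linarith)
    linarith [le_csInf hBne hδle]
  have ht₀I : t₀ ∈ Set.Icc a b := ⟨ht₀ge, ht₀le⟩
  have hlt_le : ∀ s, a ≤ s → s < t₀ → M s ≤ ψ s := by
    intro s hsa hst
    by_contra hgt
    push_neg at hgt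
    have hsB : s ∈ B := ⟨⟨hsa, le_trans hst.le ht₀le⟩, hgt⟩
    linarith [csInf_le hBbd hsB]
  have hMle : M t₀ ≤ ψ t₀ := by
    have htend : Tendsto D (𝓝[<] t₀) (𝓝 (D t₀)) := (hDc.continuousAt).continuousWithinAt
    have hev : ∀ᶠ s in 𝓝[<] t₀, D s ≤ 0 := by
      filter_upwards [Ioo_mem_nhdsLT_of_mem (Set.mem_Ioc.mpr ⟨ha_lt, le_refl t₀⟩)] with s hs
      exact sub_nonpos.mpr (hlt_le s hs.1.le hs.2)
    have := le_of_tendsto htend hev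
    rw [hD] at this
    simp only at this
    linarith
  have hψle : ψ t₀ ≤ M t₀ := by
    by_contra hgt
    push_neg at hgt
    obtain ⟨δ', hδ', hδ'P⟩ := hnear t₀ (by rw [hD]; simp only; linarith)
    obtain ⟨s, hsB, hslt⟩ := exists_lt_of_csInf_lt hBne (lt_add_of_pos_right t₀ hδ')
    have hs1 : t₀ ≤ s := csInf_le hBbd hsB
    have := hδ'P s (by rw [abs_lt]; constructor <;> linarith)
    rw [hD] at this
    simp only at this
    exact absurd hsB.2 (by linarith)
  have hMψ : M t₀ = ψ t₀ := le_antisymm hMle hψle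
  -- maximizer at time t₀
  obtain ⟨x₀, hx₀max, hx₀eq⟩ := exists_max hwcu hperu t₀
  have hsq_eq : ∑ i, u t₀ x₀ i ^ 2 = M t₀ ^ 2 := by
    rw [hM, hx₀eq, sq_nrm]
  -- smoothness of slices
  have hu_x : ∀ t i, ContDiff ℝ (⊤ : ℕ∞) (fun y : V => u t y i) := by
    intro t i
    have h1 : ContDiff ℝ (⊤ : ℕ∞) (fun y : V => u t y) :=
      hu.comp (contDiff_const.prodMk contDiff_id)
    exact (ContinuousLinearMap.proj (R := ℝ) (φ := fun _ : Fin 3 => ℝ) i).contDiff.comp h1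
  have hu_t : ∀ (x : V) i, ContDiff ℝ (⊤ : ℕ∞) (fun s : ℝ => u s x i) := by
    intro x i
    have h1 : ContDiff ℝ (⊤ : ℕ∞) (fun s : ℝ => u s x) :=
      hu.comp (contDiff_id.prodMk contDiff_const)
    exact (ContinuousLinearMap.proj (R := ℝ) (φ := fun _ : Fin 3 => ℝ) i).contDiff.comp h1
  -- spatial maximum principle
  have hmax_sq : ∀ y, ∑ i, u t₀ y i ^ 2 ≤ ∑ i, u t₀ x₀ i ^ 2 := by
    intro y
    have h1 := pow_le_pow_left₀ (nrm_nonneg (u t₀ y)) (hx₀max y) 2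
    rwa [sq_nrm, sq_nrm] at h1
  have hlap : ∑ i, u t₀ x₀ i * lap3 (fun y => u t₀ y i) x₀ ≤ 0 :=
    sum_lap_nonpos (v := fun i y => u t₀ y i) (fun i => hu_x t₀ i) hmax_sq
  -- time derivative
  set d : Fin 3 → ℝ := fun i => deriv (fun s => u s x₀ i) t₀ with hd
  have hdd : ∀ i, HasDerivAt (fun s => u s x₀ i) (d i) t₀ :=
    fun i => ((hu_t x₀ i).differentiable (by simp) t₀).hasDerivAt
  have hgd : HasDerivAt (fun t => ∑ i, u t x₀ i ^ 2) (∑ i, 2 * u t₀ x₀ i * d i) t₀ := by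
    apply HasDerivAt.fun_sum
    intro i _
    have := (hdd i).fun_pow 2
    refine this.congr_deriv ?_
    push_cast
    ring
  have hψsq : HasDerivAt (fun t => ψ t ^ 2) (2 * ψ t₀ * (-γ * ψ t₀ + G t₀)) t₀ := by
    have := (hψd t₀).fun_pow 2
    refine this.congr_deriv ?_
    push_cast
    ring
  have hgder : HasDerivAt (fun t => (∑ i, u t x₀ i ^ 2) - ψ t ^ 2)
      ((∑ i, 2 * u t₀ x₀ i * d i) - 2 * ψ t₀ * (-γ * ψ t₀ + G t₀)) t₀ := hgd.sub hψsq
  have hD0 : 0 ≤ (∑ i, 2 * u t₀ x₀ i * d i) - 2 * ψ t₀ * (-γ * ψ t₀ + G t₀) := by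
    apply deriv_nonneg_of_left_le hgder ha_lt
    intro s hsa hst
    have h1 : nrm (u s x₀) ≤ ψ s := le_trans (le_supn hwcu hperu s x₀) (hlt_le s hsa hst)
    have h2 : ∑ i, u s x₀ i ^ 2 ≤ ψ s ^ 2 := by
      rw [← sq_nrm (u s x₀)]
      exact pow_le_pow_left₀ (nrm_nonneg _) h1 2
    have h3 : (∑ i, u t₀ x₀ i ^ 2) - ψ t₀ ^ 2 = 0 := by
      rw [hsq_eq, hMψ]
      ring
    have h4 : 0 ≤ ψ s := (hψpos s hsa).le
    linarith
  -- PDE substitution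
  have hdi : ∀ i, d i = ν * lap3 (fun y => u t₀ y i) x₀ + f t₀ x₀ i - γ * u t₀ x₀ i
      - crossProduct (curl3 (u t₀) x₀) (u t₀ x₀) i := by
    intro i
    have := hpde t₀ ht₀I x₀ i
    rw [hd]
    simp only
    linarith
  have hcross : ∑ i, u t₀ x₀ i * crossProduct (curl3 (u t₀) x₀) (u t₀ x₀) i = 0 := by
    have h1 := dot_cross_self (curl3 (u t₀) x₀) (u t₀ x₀)
    simpa [dotProduct] using h1
  have hCS : ∑ i, u t₀ x₀ i * f t₀ x₀ i ≤ M t₀ * F t₀ := by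
    calc ∑ i, u t₀ x₀ i * f t₀ x₀ i ≤ nrm (u t₀ x₀) * nrm (f t₀ x₀) :=
          cauchy_schwarz _ _
      _ ≤ nrm (u t₀ x₀) * F t₀ :=
          mul_le_mul_of_nonneg_left (le_supn hf hperf t₀ x₀) (nrm_nonneg _)
      _ = M t₀ * F t₀ := by rw [hM, hx₀eq]
  have hexp : ∑ i, 2 * u t₀ x₀ i * d i
      = 2 * ν * (∑ i, u t₀ x₀ i * lap3 (fun y => u t₀ y i) x₀)
        + 2 * (∑ i, u t₀ x₀ i * f t₀ x₀ i)
        - 2 * γ * (∑ i, u t₀ x₀ i ^ 2)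
        - 2 * (∑ i, u t₀ x₀ i * crossProduct (curl3 (u t₀) x₀) (u t₀ x₀) i) := by
    simp only [Finset.mul_sum, ← Finset.sum_sub_distrib, ← Finset.sum_add_distrib]
    exact Finset.sum_congr rfl fun i _ => by rw [hdi i]; ring
  -- final contradiction
  have hψt0 : 0 < ψ t₀ := hψpos t₀ ht₀ge
  rw [hexp, hsq_eq, hMψ, hG] at hD0
  simp only at hD0
  have hνA : 2 * ν * (∑ i, u t₀ x₀ i * lap3 (fun y => u t₀ y i) x₀) ≤ 0 := by
    nlinarith
  have hCS' : 2 * (∑ i, u t₀ x₀ i * f t₀ x₀ i) ≤ 2 * (ψ t₀ * F t₀) := by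
    rw [← hMψ]
    linarith
  nlinarith [hD0, hνA, hCS', hcross, hψt0, hε]

end MPaux

/-- Maximum principle for the damped viscous rotational Burgers equation
`∂ₜu + (∇×u)×u + γu = νΔu + f` on `𝕋³ × [a,b]`:
`‖u(t)‖_{L^∞} ≤ e^{−γ(t−a)}‖u(a)‖_{L^∞} + ∫ₐᵗ e^{−γ(t−s)}‖f(s)‖_{L^∞} ds`. -/
theorem maximum_principle_damped
    (ν γ a b : ℝ) (hν : 0 < ν) (hγ : 0 ≤ γ) (hab : a < b)
    (u f : ℝ → (Fin 3 → ℝ) → (Fin 3 → ℝ))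
    (hu : ContDiff ℝ (⊤ : ℕ∞) fun p : ℝ × (Fin 3 → ℝ) => u p.1 p.2)
    (hf : Continuous fun p : ℝ × (Fin 3 → ℝ) => f p.1 p.2)
    (hperu : ∀ t x (j : Fin 3), u t (x + Pi.single j (2 * Real.pi)) = u t x)
    (hperf : ∀ t x (j : Fin 3), f t (x + Pi.single j (2 * Real.pi)) = f t x)
    (hpde : ∀ t ∈ Set.Icc a b, ∀ x i,
      deriv (fun s => u s x i) t + crossProduct (curl3 (u t) x) (u t x) i
          + γ * u t x i =
        ν * lap3 (fun y => u t y i) x + f t x i)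
    (hfint : ∀ t ∈ Set.Icc a b, IntervalIntegrable
      (fun s => Real.exp (-γ * (t - s)) *
        ⨆ x : Fin 3 → ℝ, Real.sqrt (∑ i, (f s x i) ^ 2)) volume a t) :
    ∀ t ∈ Set.Icc a b,
      (⨆ x : Fin 3 → ℝ, Real.sqrt (∑ i, (u t x i) ^ 2)) ≤
        Real.exp (-γ * (t - a)) *
            (⨆ x : Fin 3 → ℝ, Real.sqrt (∑ i, (u a x i) ^ 2)) +
          ∫ s in a..t, Real.exp (-γ * (t - s)) *
            ⨆ x : Fin 3 → ℝ, Real.sqrt (∑ i, (f s x i) ^ 2) := by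
  have hFc : Continuous (MPaux.supn f) := MPaux.supn_continuous hf hperf
  intro t ht
  show MPaux.supn u t ≤ Real.exp (-γ * (t - a)) * MPaux.supn u a
      + ∫ s in a..t, Real.exp (-γ * (t - s)) * MPaux.supn f s
  set M := MPaux.supn u with hM
  set F := MPaux.supn f with hF
  have key := MPaux.key_bound ν γ a b hν hγ hab u f hu hf hperu hperf hpde
  have hIntF : IntervalIntegrable (fun s => Real.exp (-γ * (t - s)) * F s) volume a t := by
    apply Continuous.intervalIntegrable
    exact (Real.continuous_exp.comp (by continuity)).mul hFc
  have hIntE : IntervalIntegrable (fun s => Real.exp (-γ * (t - s))) volume a t := by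
    apply Continuous.intervalIntegrable
    exact Real.continuous_exp.comp (by continuity)
  set D := Real.exp (-γ * (t - a)) + ∫ s in a..t, Real.exp (-γ * (t - s)) with hD
  have hDpos : 0 < D := by
    have h2 : 0 ≤ ∫ s in a..t, Real.exp (-γ * (t - s)) :=
      intervalIntegral.integral_nonneg ht.1 fun s _ => (Real.exp_pos _).le
    have h3 := Real.exp_pos (-γ * (t - a))
    rw [hD]
    linarith
  set T := Real.exp (-γ * (t - a)) * M a
    + ∫ s in a..t, Real.exp (-γ * (t - s)) * F s with hT
  have hsplit : ∀ ε : ℝ, Real.exp (-γ * (t - a)) * (M a + ε)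
      + (∫ s in a..t, Real.exp (-γ * (t - s)) * (F s + ε)) = T + ε * D := by
    intro ε
    have h1 : (fun s => Real.exp (-γ * (t - s)) * (F s + ε))
        = fun s => Real.exp (-γ * (t - s)) * F s + ε * Real.exp (-γ * (t - s)) := by
      funext s
      ring
    rw [h1, intervalIntegral.integral_add hIntF (hIntE.const_mul ε),
      intervalIntegral.integral_const_mul, hT, hD]
    ring
  by_contra hcon
  push_neg at hcon
  set ε := (M t - T) / (2 * D) with hεdef
  have hεpos : 0 < ε := div_pos (by linarith) (by linarith)
  have hk := key ε hεpos t ht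
  rw [hsplit ε] at hk
  have hεD : ε * D = (M t - T) / 2 := by
    rw [hεdef]
    field_simp
  rw [hεD] at hk
  linarith
end
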